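/- arXiv:math/0104263 — 8 statements merged into one kernel-verified Lean document; each statement's English description precedes it below -/
import Mathlib

section
/- Let λ and μ be partitions of N with μ ≠ λ and μ dominated by λ (i.e., μ_1 + ⋯ + μ_i ≤ λ_1 + ⋯ + λ_i for all i), and let λ', μ' denote their conjugate partitions. If Σ_i (μ'_i)² = Σ_i (λ'_i)² + 2, then there exist indices j < k such that μ'_j = λ'_j + 1, μ'_k = λ'_k − 1, μ'_i = λ'_i for all i ∉ {j,k}, and λ'_j = λ'_k. In other words, μ is obtained from λ by moving exactly one box down exactly one row of the Young diagram. -/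
/-- The conjugate partition of a partition (given as a sequence of parts
`f 0 ≥ f 1 ≥ ⋯`, all parts of index `≥ N` being zero): its `i`-th entry
(`0`-indexed) is the number of parts that are `≥ i + 1`. -/
def conjPart (N : ℕ) (f : ℕ → ℕ) (i : ℕ) : ℕ :=
  ((Finset.range N).filter fun m => i + 1 ≤ f m).card

section AuxLemmas
open Finset

lemma part_le (N : ℕ) (f : ℕ → ℕ) (hsum : ∑ i ∈ range N, f i = N)
    (hz : ∀ i, N ≤ i → f i = 0) (m : ℕ) : f m ≤ N := by
  rcases lt_or_ge m N with h | h
  · calc f m ≤ ∑ i ∈ range N, f i :=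
        Finset.single_le_sum (fun _ _ => Nat.zero_le _) (mem_range.2 h)
    _ = N := hsum
  · simp [hz m h]

lemma conjPart_iff (N : ℕ) (f : ℕ → ℕ) (hf : ∀ i j, i ≤ j → f j ≤ f i)
    (hz : ∀ i, N ≤ i → f i = 0) (m i : ℕ) :
    i + 1 ≤ f m ↔ m < conjPart N f i := by
  constructor
  · intro h
    have hmN : m < N := by
      by_contra hc
      rw [hz m (le_of_not_gt hc)] at h; omega
    have hsub : range (m+1) ⊆ (range N).filter fun t => i + 1 ≤ f t := by
      intro t ht
      rw [mem_range] at ht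
      rw [mem_filter, mem_range]
      have htm : t ≤ m := by omega
      exact ⟨lt_of_le_of_lt htm hmN, le_trans h (hf t m htm)⟩
    have := Finset.card_le_card hsub
    simpa [conjPart] using this
  · intro h
    by_contra hc
    push_neg at hc
    have hsub : ((range N).filter fun t => i + 1 ≤ f t) ⊆ range m := by
      intro t ht
      rw [mem_filter] at ht
      rw [mem_range]
      by_contra htm
      push_neg at htm
      have := le_trans ht.2 (hf m t htm)
      omega
    have hcard := Finset.card_le_card hsub
    rw [Finset.card_range] at hcard
    unfold conjPart at h
    omega

lemma conjPart_zero_of_ge (N : ℕ) (f : ℕ → ℕ) (hle : ∀ m, f m ≤ N) (i : ℕ)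
    (hi : N ≤ i) : conjPart N f i = 0 := by
  simp only [conjPart, Finset.card_eq_zero, Finset.filter_eq_empty_iff]
  intro m _
  have := hle m
  omega

lemma conjPart_anti (N : ℕ) (f : ℕ → ℕ) (i j : ℕ) (h : i ≤ j) :
    conjPart N f j ≤ conjPart N f i := by
  apply Finset.card_le_card
  intro t ht
  rw [mem_filter] at ht ⊢
  exact ⟨ht.1, by omega⟩

lemma sum_conjPart (N : ℕ) (f : ℕ → ℕ) (n : ℕ) :
    ∑ t ∈ range n, conjPart N f t = ∑ m ∈ range N, min (f m) n := by
  have h1 : ∀ t, conjPart N f t = ∑ m ∈ range N, if t + 1 ≤ f m then 1 else 0 := by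
    intro t
    unfold conjPart
    rw [Finset.card_filter]
  calc ∑ t ∈ range n, conjPart N f t
      = ∑ t ∈ range n, ∑ m ∈ range N, if t + 1 ≤ f m then 1 else 0 := by
        exact Finset.sum_congr rfl fun t _ => h1 t
    _ = ∑ m ∈ range N, ∑ t ∈ range n, if t + 1 ≤ f m then 1 else 0 :=
        Finset.sum_comm
    _ = ∑ m ∈ range N, min (f m) n := by
        refine Finset.sum_congr rfl fun m _ => ?_
        have : ∑ t ∈ range n, (if t + 1 ≤ f m then 1 else 0)
            = ((range n).filter fun t => t + 1 ≤ f m).card := by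
          rw [Finset.card_filter]
        rw [this]
        have : ((range n).filter fun t => t + 1 ≤ f m) = range (min (f m) n) := by
          ext t
          simp only [mem_filter, mem_range, lt_min_iff]
          omega
        rw [this, Finset.card_range]

lemma abel_sum (e a : ℕ → ℤ) (n : ℕ) :
    ∑ i ∈ range n, e i * a i
      = (∑ i ∈ range n, (∑ t ∈ range (i+1), e t) * (a i - a (i+1)))
        + (∑ t ∈ range n, e t) * a n := by
  induction n with
  | zero => simp
  | succ n ih =>
    rw [Finset.sum_range_succ, ih, Finset.sum_range_succ (f := fun i =>
      (∑ t ∈ range (i+1), e t) * (a i - a (i+1))),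
      Finset.sum_range_succ (f := fun t => e t)]
    ring

lemma core (N : ℕ) (a b : ℕ → ℤ)
    (ha_anti : ∀ i j, i ≤ j → a j ≤ a i)
    (haN : a N = 0)
    (hsum : ∑ i ∈ range N, b i = ∑ i ∈ range N, a i)
    (hP : ∀ n, 0 ≤ ∑ t ∈ range n, (b t - a t))
    (hex : ∃ i, i < N ∧ b i ≠ a i)
    (hsq : ∑ i ∈ range N, b i ^ 2 = ∑ i ∈ range N, a i ^ 2 + 2) :
    ∃ j k, j < k ∧ k < N ∧ b j = a j + 1 ∧ b k = a k - 1 ∧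
      (∀ i, i < N → i ≠ j → i ≠ k → b i = a i) ∧ a j = a k := by
  classical
  set e : ℕ → ℤ := fun i => b i - a i with he
  have hsum_e : ∑ i ∈ range N, e i = 0 := by
    simp only [he, Finset.sum_sub_distrib, hsum, sub_self]
  -- key identity
  have hkey : ∑ i ∈ range N, e i ^ 2 + 2 * ∑ i ∈ range N, e i * a i = 2 := by
    have h1 : ∑ i ∈ range N, (e i ^ 2 + 2 * (e i * a i))
        = ∑ i ∈ range N, (b i ^ 2 - a i ^ 2) :=
      Finset.sum_congr rfl fun i _ => by simp only [he]; ring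
    rw [Finset.sum_add_distrib, Finset.sum_sub_distrib, ← Finset.mul_sum] at h1
    omega
  -- Σ e a ≥ 0 by Abel
  have hEA : 0 ≤ ∑ i ∈ range N, e i * a i := by
    rw [abel_sum e a N, hsum_e, zero_mul, add_zero]
    refine Finset.sum_nonneg fun i _ => mul_nonneg (hP (i+1)) ?_
    have := ha_anti i (i+1) (by omega)
    omega
  have hsq2 : ∑ i ∈ range N, e i ^ 2 ≤ 2 := by omega
  set S : Finset ℕ := (range N).filter fun i => e i ≠ 0 with hSdef
  have hSsum_e : ∑ i ∈ S, e i = 0 := by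
    rw [hSdef, Finset.sum_filter_ne_zero, hsum_e]
  have hS_sq_le : ∑ i ∈ S, e i ^ 2 ≤ 2 := by
    refine le_trans (Finset.sum_le_sum_of_subset_of_nonneg (Finset.filter_subset _ _)
      fun i _ _ => sq_nonneg _) hsq2
  have hone_le : ∀ i ∈ S, 1 ≤ e i ^ 2 := by
    intro i hi
    have hne : e i ≠ 0 := (Finset.mem_filter.1 hi).2
    rcases hne.lt_or_gt with h | h <;> nlinarith
  have hcard_le : S.card ≤ 2 := by
    have h1 : (S.card : ℤ) * 1 ≤ ∑ i ∈ S, e i ^ 2 := by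
      have := Finset.card_nsmul_le_sum S (fun i => e i ^ 2) 1 hone_le
      simpa [nsmul_eq_mul] using this
    have : (S.card : ℤ) ≤ 2 := by omega
    exact_mod_cast this
  have hcard_ge : 2 ≤ S.card := by
    obtain ⟨i0, hi0N, hi0⟩ := hex
    have hi0S : i0 ∈ S := Finset.mem_filter.2 ⟨mem_range.2 hi0N, sub_ne_zero.2 hi0⟩
    rcases Nat.lt_or_ge S.card 2 with h | h
    · exfalso
      have h1 : S.card = 1 := by
        have := Finset.card_pos.2 ⟨i0, hi0S⟩
        omega
      obtain ⟨x, hx⟩ := Finset.card_eq_one.1 h1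
      rw [hx, Finset.sum_singleton] at hSsum_e
      have : x ∈ S := hx ▸ Finset.mem_singleton_self x
      exact (Finset.mem_filter.1 this).2 hSsum_e
    · exact h
  have hcard : S.card = 2 := le_antisymm hcard_le hcard_ge
  obtain ⟨j, k, hjk, hSeq⟩ : ∃ j k, j < k ∧ S = {j, k} := by
    obtain ⟨x, y, hxy, hS⟩ := Finset.card_eq_two.1 hcard
    rcases hxy.lt_or_gt with h | h
    · exact ⟨x, y, h, hS⟩
    · exact ⟨y, x, h, by rw [hS, Finset.pair_comm]⟩
  have hjS : j ∈ S := hSeq ▸ Finset.mem_insert_self j {k}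
  have hkS : k ∈ S := hSeq ▸ (Finset.mem_insert_of_mem (Finset.mem_singleton_self k))
  have hjN : j < N := mem_range.1 (Finset.mem_of_mem_filter j hjS)
  have hkN : k < N := mem_range.1 (Finset.mem_of_mem_filter k hkS)
  have hzero : ∀ i, i < N → i ≠ j → i ≠ k → e i = 0 := by
    intro i hiN hij hik
    by_contra hc
    have : i ∈ S := Finset.mem_filter.2 ⟨mem_range.2 hiN, hc⟩
    rw [hSeq, Finset.mem_insert, Finset.mem_singleton] at this
    tauto
  have hpair_sum : e j + e k = 0 := by
    rw [hSeq, Finset.sum_pair hjk.ne] at hSsum_e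
    exact hSsum_e
  have hpair_sq : e j ^ 2 + e k ^ 2 ≤ 2 := by
    rw [hSeq, Finset.sum_pair hjk.ne] at hS_sq_le
    exact hS_sq_le
  have hsqj : e j ^ 2 = 1 := by
    linarith [hone_le j hjS, hone_le k hkS, hpair_sq]
  have hsqk : e k ^ 2 = 1 := by
    linarith [hone_le j hjS, hone_le k hkS, hpair_sq]
  -- e j ≥ 0 from partial sums
  have hPj : ∑ t ∈ range (j+1), e t = e j := by
    rw [Finset.sum_range_succ]
    have : ∑ t ∈ range j, e t = 0 :=
      Finset.sum_eq_zero fun t ht => hzero t (lt_trans (mem_range.1 ht) (lt_of_lt_of_le hjk (le_of_lt hkN))) (by have := mem_range.1 ht; omega) (by have := mem_range.1 ht; omega)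
    rw [this, zero_add]
  have hejpos : 0 ≤ e j := by
    simpa [hPj] using hP (j+1)
  have hej1 : e j = 1 := by
    have h : (e j - 1) * (e j + 1) = 0 := by linear_combination hsqj
    rcases mul_eq_zero.1 h with h | h
    · linarith
    · linarith
  have hek1 : e k = -1 := by linarith
  -- sum of squares over range N equals 2, hence Σ e a = 0
  have hsq_full : ∑ i ∈ range N, e i ^ 2 = 2 := by
    have : ∑ i ∈ range N, e i ^ 2 = ∑ i ∈ S, e i ^ 2 := by
      rw [hSdef]
      rw [Finset.sum_filter_of_ne]
      intro i _ h
      intro hzero'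
      rw [hzero'] at h
      simp at h
    rw [this, hSeq, Finset.sum_pair hjk.ne, hsqj, hsqk]
    norm_num
  have hEA0 : ∑ i ∈ range N, e i * a i = 0 := by omega
  have hEA_pair : e j * a j + e k * a k = 0 := by
    have : ∑ i ∈ range N, e i * a i = ∑ i ∈ S, e i * a i := by
      rw [hSdef, Finset.sum_filter_of_ne]
      intro i _ h hz
      rw [hz] at h
      simp at h
    rw [this, hSeq, Finset.sum_pair hjk.ne] at hEA0
    exact hEA0
  have hajk : a j = a k := by
    rw [hej1, hek1] at hEA_pair
    omega
  refine ⟨j, k, hjk, hkN, ?_, ?_, ?_, hajk⟩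
  · have : e j = 1 := hej1
    simp only [he] at this
    omega
  · have : e k = -1 := hek1
    simp only [he] at this
    omega
  · intro i hiN hij hik
    have := hzero i hiN hij hik
    simp only [he] at this
    omega
section
variable (N : ℕ) (lam mu : ℕ → ℕ)

lemma conj_dom_rev
    (hmu_anti : ∀ i j, i ≤ j → mu j ≤ mu i)
    (hmu_zero : ∀ i, N ≤ i → mu i = 0)
    (hsum_eq : ∑ i ∈ range N, mu i = ∑ i ∈ range N, lam i)
    (hdom : ∀ i, ∑ t ∈ range i, mu t ≤ ∑ t ∈ range i, lam t) (n : ℕ) :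
    ∑ t ∈ range n, conjPart N lam t ≤ ∑ t ∈ range n, conjPart N mu t := by
  rw [sum_conjPart, sum_conjPart]
  set r := conjPart N mu n with hr
  have hrN : r ≤ N := by
    have := Finset.card_filter_le (range N) (fun m => n + 1 ≤ mu m)
    simpa [conjPart, hr] using this
  have hMx : ∑ m ∈ range N, max ((mu m : ℤ) - n) 0
      ≤ ∑ m ∈ range N, max ((lam m : ℤ) - n) 0 := by
    have hsplit : ∑ m ∈ range N, max ((mu m : ℤ) - n) 0
        = ∑ m ∈ range r, ((mu m : ℤ) - n) := by
      rw [← Finset.sum_range_add_sum_Ico _ hrN]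
      have h1 : ∑ m ∈ range r, max ((mu m : ℤ) - n) 0
          = ∑ m ∈ range r, ((mu m : ℤ) - n) := by
        refine Finset.sum_congr rfl fun m hm => ?_
        have h := (conjPart_iff N mu hmu_anti hmu_zero m n).2 (hr ▸ mem_range.1 hm)
        have h' : (n : ℤ) + 1 ≤ mu m := by exact_mod_cast h
        omega
      have h2 : ∑ m ∈ Finset.Ico r N, max ((mu m : ℤ) - n) 0 = 0 := by
        refine Finset.sum_eq_zero fun m hm => ?_
        have hmr : r ≤ m := (Finset.mem_Ico.1 hm).1
        have hmn : mu m ≤ n := by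
          by_contra hc
          have := (conjPart_iff N mu hmu_anti hmu_zero m n).1 (by omega)
          omega
        have : (mu m : ℤ) ≤ n := by exact_mod_cast hmn
        omega
      rw [h1, h2, add_zero]
    rw [hsplit]
    have hstep : ∑ m ∈ range r, ((mu m : ℤ) - n) ≤ ∑ m ∈ range r, ((lam m : ℤ) - n) := by
      rw [Finset.sum_sub_distrib, Finset.sum_sub_distrib]
      have := hdom r
      have hc : (∑ m ∈ range r, (mu m : ℤ)) ≤ ∑ m ∈ range r, (lam m : ℤ) := by
        push_cast
        exact_mod_cast this
      omega
    calc ∑ m ∈ range r, ((mu m : ℤ) - n) ≤ ∑ m ∈ range r, ((lam m : ℤ) - n) := hstep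
      _ ≤ ∑ m ∈ range r, max ((lam m : ℤ) - n) 0 :=
          Finset.sum_le_sum fun m _ => le_max_left _ _
      _ ≤ ∑ m ∈ range N, max ((lam m : ℤ) - n) 0 :=
          Finset.sum_le_sum_of_subset_of_nonneg (Finset.range_subset_range.2 hrN)
            fun m _ _ => le_max_right _ _
  have hcast : ∀ f : ℕ → ℕ, ((∑ m ∈ range N, min (f m) n : ℕ) : ℤ)
      = (∑ m ∈ range N, (f m : ℤ)) - ∑ m ∈ range N, max ((f m : ℤ) - n) 0 := by
    intro f
    push_cast
    rw [← Finset.sum_sub_distrib]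
    exact Finset.sum_congr rfl fun m _ => by omega
  have hZ : ((∑ m ∈ range N, min (lam m) n : ℕ) : ℤ)
      ≤ ((∑ m ∈ range N, min (mu m) n : ℕ) : ℤ) := by
    rw [hcast, hcast]
    have hs : (∑ m ∈ range N, (mu m : ℤ)) = ∑ m ∈ range N, (lam m : ℤ) := by
      exact_mod_cast hsum_eq
    omega
  exact_mod_cast hZ

lemma conj_ne
    (hlam_anti : ∀ i j, i ≤ j → lam j ≤ lam i)
    (hmu_anti : ∀ i j, i ≤ j → mu j ≤ mu i)
    (hlam_zero : ∀ i, N ≤ i → lam i = 0)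
    (hmu_zero : ∀ i, N ≤ i → mu i = 0)
    (hlam_le : ∀ m, lam m ≤ N) (hmu_le : ∀ m, mu m ≤ N)
    (hne : mu ≠ lam) :
    ∃ i, i < N ∧ conjPart N mu i ≠ conjPart N lam i := by
  by_contra hc
  push_neg at hc
  apply hne
  funext m
  have key : ∀ i : ℕ, (i + 1 ≤ mu m ↔ i + 1 ≤ lam m) := by
    intro i
    rcases lt_or_ge i N with h | h
    · rw [conjPart_iff N mu hmu_anti hmu_zero m i,
        conjPart_iff N lam hlam_anti hlam_zero m i, hc i h]
    · have h1 := hmu_le m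
      have h2 := hlam_le m
      omega
  have k1 := key (mu m - 1)
  have k2 := key (lam m - 1)
  omega

end

end AuxLemmas

/-- if `μ ≠ λ` are partitions of `N` with `μ` dominated by `λ` and the
sum of squares of the conjugate parts increases by exactly `2`, then `μ` is obtained
from `λ` by moving exactly one box down exactly one row: the conjugates differ in
exactly two columns `j < k`, by `+1` and `−1` respectively, and `λ'_j = λ'_k`. -/
theorem dominated_conj_sum_sq_add_two (N : ℕ) (hN : 1 ≤ N) (lam mu : ℕ → ℕ)
    (hlam_anti : ∀ i j : ℕ, i ≤ j → lam j ≤ lam i)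
    (hmu_anti : ∀ i j : ℕ, i ≤ j → mu j ≤ mu i)
    (hlam_sum : ∑ i ∈ Finset.range N, lam i = N)
    (hmu_sum : ∑ i ∈ Finset.range N, mu i = N)
    (hlam_zero : ∀ i, N ≤ i → lam i = 0)
    (hmu_zero : ∀ i, N ≤ i → mu i = 0)
    (hne : mu ≠ lam)
    (hdom : ∀ i : ℕ, ∑ t ∈ Finset.range i, mu t ≤ ∑ t ∈ Finset.range i, lam t)
    (hsq : ∑ i ∈ Finset.range N, (conjPart N mu i) ^ 2
         = ∑ i ∈ Finset.range N, (conjPart N lam i) ^ 2 + 2) :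
    ∃ j k : ℕ, j < k ∧
      conjPart N mu j = conjPart N lam j + 1 ∧
      conjPart N mu k = conjPart N lam k - 1 ∧
      (∀ i : ℕ, i ≠ j → i ≠ k → conjPart N mu i = conjPart N lam i) ∧
      conjPart N lam j = conjPart N lam k := by
  have hlam_le := part_le N lam hlam_sum hlam_zero
  have hmu_le := part_le N mu hmu_sum hmu_zero
  have hsumconj : ∀ f : ℕ → ℕ, (∀ m, f m ≤ N) → (∑ i ∈ Finset.range N, f i = N) →
      ∑ t ∈ Finset.range N, conjPart N f t = N := by
    intro f hle hs
    rw [sum_conjPart]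
    rw [show (∑ m ∈ Finset.range N, min (f m) N) = ∑ m ∈ Finset.range N, f m from
      Finset.sum_congr rfl fun m _ => min_eq_left (hle m)]
    exact hs
  obtain ⟨j, k, hjk, hkN, hbj, hbk, hother, hajk⟩ :=
    core N (fun i => (conjPart N lam i : ℤ)) (fun i => (conjPart N mu i : ℤ))
      (fun i j h => by beta_reduce; exact_mod_cast conjPart_anti N lam i j h)
      (by beta_reduce; exact_mod_cast conjPart_zero_of_ge N lam hlam_le N le_rfl)
      (by
        have h1 := hsumconj lam hlam_le hlam_sum
        have h2 := hsumconj mu hmu_le hmu_sum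
        exact_mod_cast h2.trans h1.symm)
      (fun n => by
        have h := conj_dom_rev N lam mu hmu_anti hmu_zero
          (hmu_sum.trans hlam_sum.symm) hdom n
        rw [Finset.sum_sub_distrib, sub_nonneg]
        exact_mod_cast h)
      (by
        obtain ⟨i, hiN, hine⟩ := conj_ne N lam mu hlam_anti hmu_anti hlam_zero
          hmu_zero hlam_le hmu_le hne
        exact ⟨i, hiN, by beta_reduce; exact_mod_cast hine⟩)
      (by beta_reduce; exact_mod_cast hsq)
  refine ⟨j, k, hjk, ?_, ?_, ?_, ?_⟩
  · exact_mod_cast hbj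
  · omega
  · intro i hij hik
    rcases lt_or_ge i N with h | h
    · exact_mod_cast hother i h hij hik
    · rw [conjPart_zero_of_ge N mu hmu_le i h, conjPart_zero_of_ge N lam hlam_le i h]
  · exact_mod_cast hajk
end

section
/- Let n ≥ 1, let ι be a type, and let A be an n×n matrix over the multivariate polynomial ring ℂ[X_v : v ∈ ι] such that every entry of A is either 0 or a single indeterminate X_v, distinct nonzero entries involving pairwise distinct indeterminates, and such that the zero pattern is lower-left closed: if A(i,j) = 0 then A(i',j') = 0 for all i' ≥ i and j' ≤ j. Then det(A) ≠ 0 if and only if every diagonal entry A(i,i) is nonzero. -/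
open MvPolynomial

/-- let `A` be an `n × n` matrix whose entries are either `0` or single
indeterminates (pairwise distinct indeterminates at distinct nonzero entries), with a
lower-left closed zero pattern: `A i j = 0` implies `A i' j' = 0` whenever `i' ≥ i`
and `j' ≤ j`.  Then `det A ≠ 0` iff every diagonal entry is nonzero. -/
theorem det_ne_zero_iff_diag_ne_zero_of_lowerLeftClosed
    (n : ℕ) (hn : 1 ≤ n) (ι : Type*)
    (A : Matrix (Fin n) (Fin n) (MvPolynomial ι ℂ))
    (hentry : ∀ i j, A i j = 0 ∨ ∃ v : ι, A i j = X v)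
    (hdistinct : ∀ (i j i' j' : Fin n) (v v' : ι),
      A i j = X v → A i' j' = X v' → (i, j) ≠ (i', j') → v ≠ v')
    (hzero : ∀ i j, A i j = 0 → ∀ i' j', i ≤ i' → j' ≤ j → A i' j' = 0) :
    A.det ≠ 0 ↔ ∀ i, A i i ≠ 0 := by
  classical
  constructor
  · intro hdet i hii
    apply hdet
    rw [Matrix.det_apply]
    apply Finset.sum_eq_zero
    intro σ _
    have hex : ∃ j : Fin n, j ≤ i ∧ i ≤ σ j := by
      by_contra h
      push_neg at h
      have hmap : ∀ j ∈ Finset.Iic i, σ j ∈ Finset.Iio i := by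
        intro j hj
        simp only [Finset.mem_Iic] at hj
        simp only [Finset.mem_Iio]
        exact h j hj
      have hinj : Set.InjOn σ (Finset.Iic i) := fun a _ b _ hab => σ.injective hab
      have hle := Finset.card_le_card_of_injOn σ hmap hinj
      rw [Fin.card_Iic, Fin.card_Iio] at hle
      omega
    obtain ⟨j, hj1, hj2⟩ := hex
    have hz : A (σ j) j = 0 := hzero i i hii (σ j) j hj2 hj1
    have hp : ∏ k : Fin n, A (σ k) k = 0 := Finset.prod_eq_zero (Finset.mem_univ j) hz
    rw [hp, smul_zero]
  · intro hdiag hdet0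
    choose v hv using fun i => (hentry i i).resolve_left (hdiag i)
    set f : ι → ℂ := fun w => if ∃ i, w = v i then 1 else 0 with hf
    have h0 : (MvPolynomial.eval f) A.det = 0 := by rw [hdet0]; simp
    rw [RingHom.map_det, RingHom.mapMatrix_apply] at h0
    have hA1 : A.map (MvPolynomial.eval f) = 1 := by
      ext i j
      by_cases hij : i = j
      · subst hij
        have : f (v i) = 1 := by rw [hf]; exact if_pos ⟨i, rfl⟩
        simp [Matrix.map_apply, hv i, Matrix.one_apply, this]
      · rcases hentry i j with h | ⟨w, hw⟩
        · simp [Matrix.map_apply, h, Matrix.one_apply, hij]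
        · have hnex : ¬ ∃ k, w = v k := by
            rintro ⟨k, rfl⟩
            exact hdistinct i j k k (v k) (v k) hw (hv k)
              (by simp [Prod.ext_iff]; intro h1 h2; exact hij (h1.trans h2.symm)) rfl
          simp [Matrix.map_apply, hw, hf, hnex, Matrix.one_apply, hij]
    rw [hA1, Matrix.det_one] at h0
    exact one_ne_zero h0
end

section
/- In the Richardson pattern setup, fix k with 0 ≤ k ≤ N−2I. For any two distinct strictly increasing k-tuples i ≠ i' with entries in {I+1,…,N−I}, the supports of det(A_i) and det(A_{i'}) (their sets of monomials with nonzero coefficient, as multivariate polynomials) are disjoint. Consequently m_{k+I} = Σ_i det(A_i) is zero if and only if det(A_i) = 0 for every such tuple i. -/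
open scoped Classical

noncomputable section

/-- `Stau N τ a b` encodes `(a,b) ∈ S_τ`: `1 ≤ a < b ≤ N` and every `t` with
`a ≤ t ≤ b − 1` lies in `τ`. -/
def Stau (N : ℕ) (τ : Finset ℕ) (a b : ℕ) : Prop :=
  1 ≤ a ∧ a < b ∧ b ≤ N ∧ ∀ t : ℕ, a ≤ t → t ≤ b - 1 → t ∈ τ

/-- The generic coordinate `x(a,b)`: the indeterminate `X (a,b)` if `(a,b) ∉ S_τ`,
and `0` if `(a,b) ∈ S_τ`. -/
def xcoord (N : ℕ) (τ : Finset ℕ) (a b : ℕ) : MvPolynomial (ℕ × ℕ) ℂ :=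
  if Stau N τ a b then 0 else MvPolynomial.X (a, b)

/-- Row labels `1, …, I, i_1, …, i_k` of the matrix `A_i`. -/
def rowLabel (I k : ℕ) (i : Fin k → ℕ) (p : Fin (k + I)) : ℕ :=
  if h : (p : ℕ) < I then (p : ℕ) + 1
  else i ⟨(p : ℕ) - I, by have := p.isLt; omega⟩

/-- Column labels `i_1, …, i_k, N−I+1, …, N` of the matrix `A_i`. -/
def colLabel (N I k : ℕ) (i : Fin k → ℕ) (q : Fin (k + I)) : ℕ :=
  if h : (q : ℕ) < k then i ⟨(q : ℕ), h⟩ else N - I + 1 + ((q : ℕ) - k)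

/-- The `(k+I) × (k+I)` matrix `A_i` attached to a strictly increasing `k`-tuple `i`:
its `(p,q)` entry is `x(r_p, c_q)` if `r_p < c_q` and `0` otherwise. -/
def Amat (N I k : ℕ) (τ : Finset ℕ) (i : Fin k → ℕ) :
    Matrix (Fin (k + I)) (Fin (k + I)) (MvPolynomial (ℕ × ℕ) ℂ) :=
  Matrix.of fun p q =>
    if rowLabel I k i p < colLabel N I k i q then
      xcoord N τ (rowLabel I k i p) (colLabel N I k i q)
    else 0

/-- The finite set of strictly increasing `k`-tuples with entries in `{I+1,…,N−I}`. -/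
def tupleSet (N I k : ℕ) : Finset (Fin k → Fin (N + 1)) :=
  Finset.univ.filter fun i =>
    StrictMono i ∧ ∀ t, I + 1 ≤ (i t : ℕ) ∧ (i t : ℕ) ≤ N - I

/-- `m_{k+I} = Σ_i det (A_i)`, the sum over all strictly increasing `k`-tuples `i`
with entries in `{I+1,…,N−I}`. -/
def mPoly (N I k : ℕ) (τ : Finset ℕ) : MvPolynomial (ℕ × ℕ) ℂ :=
  ∑ i ∈ tupleSet N I k, (Amat N I k τ fun t => ((i t : ℕ))).det

/-!
Every monomial of `det (A_i)` is `∏_p x(r_{π p}, c_p)` for a permutation `π`, so the first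
coordinates of its variables are exactly the row labels `1, …, I, i_1, …, i_k`. Those exceeding
`I` recover the increasing tuple `i`, so distinct tuples give determinants with disjoint
supports, and a sum of polynomials with pairwise disjoint supports vanishes only if every
summand does.
-/

open MvPolynomial Finset

lemma Finsupp.support_sum_single_one {ι α : Type*} [DecidableEq α] (s : Finset ι) (v : ι → α) :
    (∑ p ∈ s, Finsupp.single (v p) 1 : α →₀ ℕ).support = s.image v := by
  ext a
  rw [Finsupp.mem_support_iff, Finsupp.finsetSum_apply, Ne, Finset.sum_eq_zero_iff, mem_image]
  simp [Finsupp.single_apply]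

namespace MvPolynomial

variable {n σ R : Type*} [Fintype n] [DecidableEq n] [CommRing R]

lemma exists_perm_of_mem_support_det {M : Matrix n n (MvPolynomial σ R)} {e : n → n → σ}
    (hM : ∀ p q, M p q = 0 ∨ M p q = X (e p q)) {d : σ →₀ ℕ} (hd : d ∈ M.det.support) :
    ∃ π : Equiv.Perm n, d = ∑ p, Finsupp.single (e (π p) p) 1 := by
  rw [Matrix.det_apply] at hd
  obtain ⟨π, -, hπ⟩ := Finset.mem_biUnion.mp (support_sum hd)
  refine ⟨π, ?_⟩
  have hprod : ∏ p, M (π p) p = 0 ∨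
      ∏ p, M (π p) p = monomial (∑ p, Finsupp.single (e (π p) p) 1) 1 := by
    by_cases h0 : ∃ p, M (π p) p = 0
    · obtain ⟨p, hp⟩ := h0
      exact Or.inl (Finset.prod_eq_zero (Finset.mem_univ p) hp)
    · push Not at h0
      refine Or.inr ?_
      rw [monomial_sum_one]
      exact Finset.prod_congr rfl fun p _ => (hM _ _).resolve_left (h0 p)
  rw [Units.smul_def] at hπ
  replace hπ := support_smul hπ
  rcases hprod with h | h <;> rw [h] at hπ
  · simp at hπ
  · simpa using support_monomial_subset hπ

lemma fst_image_support_of_mem_support_det {α β : Type*}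
    {M : Matrix n n (MvPolynomial (α × β) R)} {r : n → α} {c : n → β}
    (hM : ∀ p q, M p q = 0 ∨ M p q = X (r p, c q)) {d : (α × β) →₀ ℕ}
    (hd : d ∈ M.det.support) : Prod.fst '' (d.support : Set (α × β)) = Set.range r := by
  obtain ⟨π, rfl⟩ := exists_perm_of_mem_support_det (e := fun p q => (r p, c q)) hM hd
  rw [Finsupp.support_sum_single_one, coe_image, coe_univ, Set.image_univ, ← Set.range_comp]
  exact π.surjective.range_comp r

lemma sum_eq_zero_iff_of_pairwiseDisjoint {ι : Type*} {s : Finset ι} {f : ι → MvPolynomial σ R}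
    (h : (s : Set ι).PairwiseDisjoint fun i => (f i).support) :
    ∑ i ∈ s, f i = 0 ↔ ∀ i ∈ s, f i = 0 := by
  refine ⟨fun hsum i hi => ?_, Finset.sum_eq_zero⟩
  by_contra hne
  obtain ⟨m, hm⟩ := Finset.nonempty_of_ne_empty (mt support_eq_empty.mp hne)
  have : coeff m (∑ j ∈ s, f j) = coeff m (f i) := by
    rw [coeff_sum]
    refine Finset.sum_eq_single_of_mem i hi fun j hj hji => ?_
    exact notMem_support_iff.mp (Finset.disjoint_right.mp (h hj hi hji) hm)
  rw [hsum, coeff_zero, eq_comm] at this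
  exact mem_support_iff.mp hm this

end MvPolynomial

lemma Amat_eq_zero_or_eq_X (N I k : ℕ) (τ : Finset ℕ) (i : Fin k → ℕ) (p q : Fin (k + I)) :
    Amat N I k τ i p q = 0 ∨ Amat N I k τ i p q = X (rowLabel I k i p, colLabel N I k i q) := by
  simp only [Amat, xcoord, Matrix.of_apply]
  split_ifs <;> simp

lemma range_rowLabel_inter_Ioi {I k : ℕ} {i : Fin k → ℕ} (hi : ∀ t, I < i t) :
    Set.range (rowLabel I k i) ∩ Set.Ioi I = Set.range i := by
  ext a
  constructor
  · rintro ⟨⟨p, rfl⟩, hp⟩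
    unfold rowLabel at hp ⊢
    split_ifs at hp ⊢ with h
    · simp only [Set.mem_Ioi] at hp
      omega
    · exact ⟨_, rfl⟩
  · rintro ⟨t, rfl⟩
    refine ⟨⟨⟨t + I, by omega⟩, ?_⟩, hi t⟩
    simp [rowLabel]

lemma disjoint_support_det_Amat {N I k : ℕ} {τ : Finset ℕ} {i i' : Fin k → ℕ}
    (hi : StrictMono i) (hi' : StrictMono i') (hlow : ∀ t, I < i t) (hlow' : ∀ t, I < i' t)
    (hne : i ≠ i') :
    Disjoint (Amat N I k τ i).det.support (Amat N I k τ i').det.support := by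
  refine Finset.disjoint_left.mpr fun d hd hd' => hne ?_
  rw [← hi.range_inj hi', ← range_rowLabel_inter_Ioi hlow, ← range_rowLabel_inter_Ioi hlow',
    ← fst_image_support_of_mem_support_det (Amat_eq_zero_or_eq_X N I k τ i) hd,
    ← fst_image_support_of_mem_support_det (Amat_eq_zero_or_eq_X N I k τ i') hd']

lemma mem_tupleSet_iff {N I k : ℕ} {j : Fin k → Fin (N + 1)} :
    j ∈ tupleSet N I k ↔
      StrictMono (fun t => (j t : ℕ)) ∧ ∀ t, I + 1 ≤ (j t : ℕ) ∧ (j t : ℕ) ≤ N - I :=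
  ⟨fun h => (mem_filter.mp h).2, fun h => mem_filter.mpr ⟨mem_univ j, h⟩⟩

lemma forall_mem_tupleSet_iff {N I k : ℕ} {P : (Fin k → ℕ) → Prop} :
    (∀ j ∈ tupleSet N I k, P fun t => (j t : ℕ)) ↔
      ∀ i : Fin k → ℕ, StrictMono i → (∀ t, I + 1 ≤ i t ∧ i t ≤ N - I) → P i := by
  refine ⟨fun h i hi hb => ?_,
    fun h j hj => h _ (mem_tupleSet_iff.mp hj).1 (mem_tupleSet_iff.mp hj).2⟩
  exact h (fun t => ⟨i t, by have := (hb t).2; omega⟩) (mem_tupleSet_iff.mpr ⟨hi, hb⟩)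

theorem support_disjoint_and_mPoly_eq_zero_iff_general
    (N I : ℕ) (τ : Finset ℕ)
    (k : ℕ) :
    (∀ i i' : Fin k → ℕ,
      StrictMono i → (∀ t, I + 1 ≤ i t ∧ i t ≤ N - I) →
      StrictMono i' → (∀ t, I + 1 ≤ i' t ∧ i' t ≤ N - I) →
      i ≠ i' →
      Disjoint (Amat N I k τ i).det.support (Amat N I k τ i').det.support) ∧
    (mPoly N I k τ = 0 ↔
      ∀ i : Fin k → ℕ, StrictMono i → (∀ t, I + 1 ≤ i t ∧ i t ≤ N - I) →
        (Amat N I k τ i).det = 0) := by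
  refine ⟨fun i i' hi hb hi' hb' hne =>
    disjoint_support_det_Amat hi hi' (fun t => (hb t).1) (fun t => (hb' t).1) hne, ?_⟩
  have hpair : (tupleSet N I k : Set (Fin k → Fin (N + 1))).PairwiseDisjoint
      fun j => (Amat N I k τ fun t => (j t : ℕ)).det.support := by
    intro j hj j' hj' hne
    obtain ⟨hi, hb⟩ := mem_tupleSet_iff.mp hj
    obtain ⟨hi', hb'⟩ := mem_tupleSet_iff.mp hj'
    exact disjoint_support_det_Amat hi hi' (fun t => (hb t).1) (fun t => (hb' t).1)
      fun h => hne (Fin.val_injective.comp_left h)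
  rw [mPoly, sum_eq_zero_iff_of_pairwiseDisjoint hpair]
  exact forall_mem_tupleSet_iff (P := fun i => (Amat N I k τ i).det = 0)

/-- in the Richardson pattern setup, the determinants `det (A_i)` for
distinct strictly increasing `k`-tuples `i` have disjoint supports (no monomial
cancellation); consequently `m_{k+I} = 0` iff every `det (A_i) = 0`. -/
theorem support_disjoint_and_mPoly_eq_zero_iff
    (N I : ℕ) (hI : 1 ≤ I) (hNI : 2 * I ≤ N) (τ : Finset ℕ)
    (hτsub : ∀ t ∈ τ, 1 ≤ t ∧ t ≤ N - 1)
    (hτ1 : ∀ t : ℕ, 1 ≤ t → t ≤ I - 1 → t ∈ τ) (hτ2 : I ∉ τ)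
    (hτ3 : ∀ t : ℕ, N - I + 1 ≤ t → t ≤ N - 1 → t ∈ τ) (hτ4 : N - I ∉ τ)
    (k : ℕ) (hk : k ≤ N - 2 * I) :
    (∀ i i' : Fin k → ℕ,
      StrictMono i → (∀ t, I + 1 ≤ i t ∧ i t ≤ N - I) →
      StrictMono i' → (∀ t, I + 1 ≤ i' t ∧ i' t ≤ N - I) →
      i ≠ i' →
      Disjoint (Amat N I k τ i).det.support (Amat N I k τ i').det.support) ∧
    (mPoly N I k τ = 0 ↔
      ∀ i : Fin k → ℕ, StrictMono i → (∀ t, I + 1 ≤ i t ∧ i t ≤ N - I) →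
        (Amat N I k τ i).det = 0) :=
  support_disjoint_and_mPoly_eq_zero_iff_general N I τ k
end
end

section
/- In the Richardson pattern setup, fix k with I ≤ k ≤ N−2I and set c := #{a : I+1 ≤ a ≤ N−2I and (a, a+I) ∉ S_τ}. There exists a strictly increasing tuple i_1 < i_2 < ⋯ < i_k with I+1 ≤ i_1, i_k ≤ N−I and (i_t, i_{t+I}) ∉ S_τ for every t with 1 ≤ t ≤ k−I, if and only if k − I ≤ c. -/
open scoped Classical

noncomputable section

private lemma stm_add {f : ℕ → ℕ} (hf : StrictMono f) (a d : ℕ) :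
    f a + d ≤ f (a + d) := by
  induction d with
  | zero => simp
  | succ d ih =>
    have h := hf (show a + d < a + (d + 1) by omega)
    omega

/-- Key counting lemma: if `i` is strictly increasing with `i 0 ≥ I+1`, values up to
index `n` are `≤ N`, and every pair `(i t, i (t+I))` with `t + I ≤ n` fails `Stau`,
then `j + 1 ≤ I + #{a ∈ [I+1, i j − I] : ¬ Stau N τ a (a+I)}` for all `j ≤ n`. -/
private lemma key_count (N I : ℕ) (hI : 1 ≤ I) (τ : Finset ℕ) (n : ℕ) (i : ℕ → ℕ)
    (hmono : StrictMono i) (h0 : I + 1 ≤ i 0) (hup : ∀ t, t ≤ n → i t ≤ N)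
    (hcon : ∀ t, t + I ≤ n → ¬ Stau N τ (i t) (i (t + I))) :
    ∀ j, j ≤ n → j + 1 ≤ I + ((Finset.Icc (I + 1) (i j - I)).filter
      fun a => ¬ Stau N τ a (a + I)).card := by
  intro j
  induction j using Nat.strong_induction_on with
  | _ j IH =>
    intro hjn
    by_cases hjI : j + 1 ≤ I
    · exact le_trans hjI (Nat.le_add_right _ _)
    have hIj : I ≤ j := by omega
    set r := j - I with hr
    have hrI : r + I = j := by omega
    have hnot : ¬ Stau N τ (i r) (i j) := by
      have := hcon r (by omega)
      rwa [hrI] at this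
    have hlow0 : ∀ t : ℕ, I + 1 + t ≤ i t := by
      intro t
      have := stm_add hmono 0 t
      simp at this
      omega
    have h1 : 1 ≤ i r := by have := hlow0 r; omega
    have h2 : i r < i j := hmono (by omega)
    have h3 : i j ≤ N := hup j hjn
    obtain ⟨s, hs1, hs2, hs3⟩ : ∃ s, i r ≤ s ∧ s ≤ i j - 1 ∧ s ∉ τ := by
      by_contra h
      push_neg at h
      exact hnot ⟨by omega, h2, h3, fun t ht1 ht2 => h t ht1 ht2⟩
    -- block start u of i j
    have hexQ : ∃ u, ∀ t, u ≤ t → t ≤ i j - 1 → t ∈ τ := by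
      refine ⟨i j, fun t ht1 ht2 => absurd ht1 (by omega)⟩
    set u := Nat.find hexQ with hu
    have hQu : ∀ t, u ≤ t → t ≤ i j - 1 → t ∈ τ := Nat.find_spec hexQ
    have hus : u ≤ i j := Nat.find_min' hexQ (fun t ht1 ht2 => absurd ht1 (by omega))
    have hsu : s < u := by
      by_contra h
      push_neg at h
      exact hs3 (hQu s h hs2)
    have hur : i r + 1 ≤ u := by omega
    have hu2 : I + 2 ≤ u := by have := hlow0 r; omega
    have huτ : u - 1 ∉ τ := by
      have hnQ : ¬ (∀ t, u - 1 ≤ t → t ≤ i j - 1 → t ∈ τ) :=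
        Nat.find_min hexQ (by omega)
      intro hmem
      apply hnQ
      intro t ht1 ht2
      by_cases htu : u ≤ t
      · exact hQu t htu ht2
      · have : t = u - 1 := by omega
        exact this ▸ hmem
    -- largest index j' ≤ j with i j' ≤ u - 1
    set j' := Nat.findGreatest (fun t => i t ≤ u - 1) j with hj'
    have hPr : i r ≤ u - 1 := by omega
    have hj'r : r ≤ j' := Nat.le_findGreatest (by omega) hPr
    have hj'le : j' ≤ j := Nat.findGreatest_le j
    have hij' : i j' ≤ u - 1 := Nat.findGreatest_spec (P := fun t => i t ≤ u - 1) (by omega : r ≤ j) hPr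
    have hgt : ∀ t, j' < t → t ≤ j → u ≤ i t := by
      intro t h1t h2t
      have := Nat.findGreatest_is_greatest (P := fun t => i t ≤ u - 1) h1t h2t
      omega
    have hj'j : j' < j := by
      rcases lt_or_eq_of_le hj'le with h | h
      · exact h
      · rw [h] at hij'; omega
    -- bound A : j - j' ≤ I
    have hA : j - j' ≤ I := by
      by_contra h
      push_neg at h
      have htj : j' < j - I := by omega
      have hut : u ≤ i (j - I) := hgt (j - I) htj (by omega)
      apply hcon (j - I) (by omega)
      rw [show j - I + I = j by omega]
      exact ⟨by omega, hmono (by omega), h3,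
        fun s' hs1' hs2' => hQu s' (le_trans hut hs1') hs2'⟩
    -- bound B : j - j' ≤ i j - u + 1
    have hB : j - j' ≤ i j - u + 1 := by
      have h1t : u ≤ i (j' + 1) := hgt (j' + 1) (by omega) (by omega)
      have h2t := stm_add hmono (j' + 1) (j - j' - 1)
      rw [show j' + 1 + (j - j' - 1) = j by omega] at h2t
      omega
    have hIH := IH j' hj'j (le_trans hj'le hjn)
    have hlowj' : I + 1 + j' ≤ i j' := hlow0 j'
    have hlowj : I + 1 + j ≤ i j := hlow0 j
    -- the two disjoint sets of bad elements
    set S1 := (Finset.Icc (I + 1) (i j' - I)).filter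
      (fun a => ¬ Stau N τ a (a + I)) with hS1
    set S2 := Finset.Icc (max (u - I) (I + 1)) (min (u - 1) (i j - I)) with hS2
    have hsub : S1 ∪ S2 ⊆ (Finset.Icc (I + 1) (i j - I)).filter
        (fun a => ¬ Stau N τ a (a + I)) := by
      intro a ha
      rcases Finset.mem_union.1 ha with ha | ha
      · rw [hS1, Finset.mem_filter, Finset.mem_Icc] at ha
        rw [Finset.mem_filter, Finset.mem_Icc]
        exact ⟨⟨ha.1.1, by omega⟩, ha.2⟩
      · rw [hS2, Finset.mem_Icc] at ha
        rw [Finset.mem_filter, Finset.mem_Icc]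
        have hl := le_trans (le_max_right _ _) ha.1
        have hl2 := le_trans (le_max_left _ _) ha.1
        have hr1 := le_trans ha.2 (min_le_left _ _)
        have hr2 := le_trans ha.2 (min_le_right _ _)
        refine ⟨⟨hl, hr2⟩, fun hSt => ?_⟩
        exact huτ (hSt.2.2.2 (u - 1) (by omega) (by omega))
    have hdisj : Disjoint S1 S2 := by
      rw [Finset.disjoint_left]
      intro a ha1 ha2
      rw [hS1, Finset.mem_filter, Finset.mem_Icc] at ha1
      rw [hS2, Finset.mem_Icc] at ha2
      have := le_trans (le_max_left _ _) ha2.1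
      omega
    have hcards : S1.card + S2.card ≤ ((Finset.Icc (I + 1) (i j - I)).filter
        (fun a => ¬ Stau N τ a (a + I))).card := by
      rw [← Finset.card_union_of_disjoint hdisj]
      exact Finset.card_le_card hsub
    have hS2card : S2.card = min (u - 1) (i j - I) + 1 - max (u - I) (I + 1) := by
      rw [hS2, Nat.card_Icc]
    rcases min_choice (u - 1) (i j - I) with hmin | hmin <;>
      rcases max_choice (u - I) (I + 1) with hmax | hmax <;>
      · have hm1 : min (u - 1) (i j - I) ≤ u - 1 := min_le_left _ _
        have hm2 : min (u - 1) (i j - I) ≤ i j - I := min_le_right _ _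
        have hm3 : u - I ≤ max (u - I) (I + 1) := le_max_left _ _
        have hm4 : I + 1 ≤ max (u - I) (I + 1) := le_max_right _ _
        omega

/-- in the Richardson pattern setup, for `I ≤ k ≤ N − 2I` there exists a
strictly increasing `k`-tuple `I+1 ≤ i_1 < ⋯ < i_k ≤ N−I` with `(i_t, i_{t+I}) ∉ S_τ`
for all admissible `t`, if and only if `k − I ≤ c`, where
`c = #{a : I+1 ≤ a ≤ N−2I, (a, a+I) ∉ S_τ}`. -/
theorem exists_tuple_iff_le_count
    (N I : ℕ) (hI : 1 ≤ I) (hNI : 2 * I ≤ N) (τ : Finset ℕ)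
    (hτsub : ∀ t ∈ τ, 1 ≤ t ∧ t ≤ N - 1)
    (hτ1 : ∀ t : ℕ, 1 ≤ t → t ≤ I - 1 → t ∈ τ) (hτ2 : I ∉ τ)
    (hτ3 : ∀ t : ℕ, N - I + 1 ≤ t → t ≤ N - 1 → t ∈ τ) (hτ4 : N - I ∉ τ)
    (k : ℕ) (hkI : I ≤ k) (hk : k ≤ N - 2 * I) :
    (∃ i : Fin k → ℕ, StrictMono i ∧ (∀ t, I + 1 ≤ i t ∧ i t ≤ N - I) ∧
        ∀ (t : ℕ) (h : t + I < k), ¬ Stau N τ (i ⟨t, by omega⟩) (i ⟨t + I, h⟩)) ↔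
      k - I ≤ ((Finset.Icc (I + 1) (N - 2 * I)).filter
        fun a => ¬ Stau N τ a (a + I)).card := by
  have hk1 : 1 ≤ k := le_trans hI hkI
  have h3I : 3 * I ≤ N := by omega
  constructor
  · rintro ⟨i, hmono, hrange, hcon⟩
    -- extend i to ℕ → ℕ
    set i' : ℕ → ℕ := fun t => if h : t < k then i ⟨t, h⟩ else N + t with hi'
    have hival : ∀ (t : ℕ) (h : t < k), i' t = i ⟨t, h⟩ := by
      intro t h; simp [hi', h]
    have hmono' : StrictMono i' := by
      intro a b hab
      by_cases ha : a < k <;> by_cases hb : b < k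
      · rw [hival a ha, hival b hb]
        exact hmono (show (⟨a, ha⟩ : Fin k) < ⟨b, hb⟩ from hab)
      · rw [hival a ha]
        have := (hrange ⟨a, ha⟩).2
        simp only [hi', dif_neg hb]
        omega
      · omega
      · simp only [hi', dif_neg ha, dif_neg hb]
        omega
    have h0' : I + 1 ≤ i' 0 := by
      rw [hival 0 (by omega)]
      exact (hrange _).1
    have hup' : ∀ t, t ≤ k - 1 → i' t ≤ N := by
      intro t ht
      have h1 : t < k := by omega
      rw [hival t h1]
      exact le_trans (hrange ⟨t, h1⟩).2 (by omega)
    have hcon' : ∀ t, t + I ≤ k - 1 → ¬ Stau N τ (i' t) (i' (t + I)) := by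
      intro t ht
      rw [hival t (by omega), hival (t + I) (by omega)]
      exact hcon t (by omega)
    have hkey := key_count N I hI τ (k - 1) i' hmono' h0' hup' hcon' (k - 1) le_rfl
    have hsub : (Finset.Icc (I + 1) (i' (k - 1) - I)).filter
        (fun a => ¬ Stau N τ a (a + I)) ⊆ (Finset.Icc (I + 1) (N - 2 * I)).filter
        (fun a => ¬ Stau N τ a (a + I)) := by
      apply Finset.filter_subset_filter
      apply Finset.Icc_subset_Icc_right
      rw [hival (k - 1) (by omega)]
      have := (hrange ⟨k - 1, by omega⟩).2
      omega
    have := Finset.card_le_card hsub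
    omega
  · intro hc
    set F := (Finset.Icc (I + 1) (N - 2 * I)).filter
      (fun a => ¬ Stau N τ a (a + I)) with hF
    set m := k - I with hm
    have hFmem : ∀ x : Fin F.card, I + 1 ≤ F.orderEmbOfFin rfl x ∧
        F.orderEmbOfFin rfl x ≤ N - 2 * I ∧
        ¬ Stau N τ (F.orderEmbOfFin rfl x) (F.orderEmbOfFin rfl x + I) := by
      intro x
      have h1 : F.orderEmbOfFin rfl x ∈ F := Finset.orderEmbOfFin_mem F rfl x
      have h2 := Finset.mem_filter.1 h1
      have h3 := Finset.mem_Icc.1 h2.1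
      exact ⟨h3.1, h3.2, h2.2⟩
    set g : ℕ → ℕ := fun t => if h : t < m then F.orderEmbOfFin rfl ⟨t, lt_of_lt_of_le h hc⟩
      else N - 2 * I + 1 + (t - m) with hg
    have hgval : ∀ (t : ℕ) (h : t < m),
        g t = F.orderEmbOfFin rfl ⟨t, lt_of_lt_of_le h hc⟩ := by
      intro t h; simp [hg, h]
    have hgval2 : ∀ (t : ℕ), ¬ t < m → g t = N - 2 * I + 1 + (t - m) := by
      intro t h; simp [hg, h]
    have hglow : ∀ t, I + 1 ≤ g t := by
      intro t
      by_cases h : t < m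
      · rw [hgval t h]; exact (hFmem _).1
      · rw [hgval2 t h]; omega
    have hghigh : ∀ t, t ≤ k - 1 → g t ≤ N - I := by
      intro t ht
      by_cases h : t < m
      · rw [hgval t h]
        exact le_trans (hFmem _).2.1 (by omega)
      · rw [hgval2 t h]; omega
    have hgmono : StrictMono g := by
      intro x y hxy
      by_cases hx : x < m <;> by_cases hy : y < m
      · rw [hgval x hx, hgval y hy]
        exact (F.orderEmbOfFin rfl).strictMono
          (show (⟨x, _⟩ : Fin F.card) < ⟨y, _⟩ from hxy)
      · rw [hgval x hx, hgval2 y hy]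
        have := (hFmem ⟨x, lt_of_lt_of_le hx hc⟩).2.1
        omega
      · omega
      · rw [hgval2 x hx, hgval2 y hy]; omega
    refine ⟨fun t => g t.1, fun a b hab => hgmono hab, fun t => ⟨hglow t.1, hghigh t.1 (by omega)⟩,
      ?_⟩
    intro t ht
    show ¬ Stau N τ (g t) (g (t + I))
    have htm : t < m := by omega
    have hbad := hFmem ⟨t, lt_of_lt_of_le htm hc⟩
    have hstep : g t + I ≤ g (t + I) := stm_add hgmono t I
    rw [hgval t htm]
    set a := F.orderEmbOfFin rfl ⟨t, lt_of_lt_of_le htm hc⟩ with ha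
    rw [hgval t htm] at hstep
    intro hSt
    obtain ⟨s, hs1, hs2, hs3⟩ : ∃ s, a ≤ s ∧ s ≤ a + I - 1 ∧ s ∉ τ := by
      by_contra h
      push_neg at h
      have h1 := hbad.1
      have h2 := hbad.2.1
      exact hbad.2.2 ⟨by omega, by omega, by omega, fun t' ht1 ht2 => h t' ht1 ht2⟩
    have hgN : g (t + I) ≤ N := le_trans (hghigh (t + I) (by omega)) (by omega)
    exact hs3 (hSt.2.2.2 s hs1 (by omega))

end
end

section
/- In the Richardson pattern setup, fix k with 0 ≤ k ≤ N−2I and set d := #{a : I+1 ≤ a ≤ N−2I and (a, a+I) ∈ S_τ}. Then m_{k+I} = 0 if and only if k > N − 2I − d. (Equivalently, in terms of the shape λ of the associated Richardson tableau, for which λ_1 + ⋯ + λ_I = N − d: m_{k+I} = 0 if and only if k + I > λ_1 + ⋯ + λ_I − I.) -/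
open scoped Classical

noncomputable section

/-- number of "gaps" (elements not in τ) in `[I+1, a-1]`. -/

def gapCount (I : ℕ) (τ : Finset ℕ) (a : ℕ) : ℕ :=
  ((Finset.Ico (I + 1) a).filter (fun t => t ∉ τ)).card

lemma gapCount_mono (I : ℕ) (τ : Finset ℕ) : Monotone (gapCount I τ) := by
  intro a b hab
  exact Finset.card_le_card (Finset.filter_subset_filter _
    (Finset.Ico_subset_Ico le_rfl hab))

lemma gapCount_add (I : ℕ) (τ : Finset ℕ) {a b : ℕ} (ha : I + 1 ≤ a) (hab : a ≤ b) :
    gapCount I τ b =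
      gapCount I τ a + ((Finset.Ico a b).filter (fun t => t ∉ τ)).card := by
  unfold gapCount
  rw [← Finset.card_union_of_disjoint, ← Finset.filter_union,
    Finset.Ico_union_Ico_eq_Ico ha hab]
  exact Finset.disjoint_filter_filter (Finset.Ico_disjoint_Ico_consecutive _ _ _)

lemma stau_iff_gapCount (N I : ℕ) (τ : Finset ℕ) {a b : ℕ}
    (ha : I + 1 ≤ a) (hab : a < b) (hb : b ≤ N) :
    Stau N τ a b ↔ gapCount I τ a = gapCount I τ b := by
  have hadd := gapCount_add I τ (a := a) (b := b) ha hab.le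
  constructor
  · rintro ⟨-, -, -, h⟩
    have : (Finset.Ico a b).filter (fun t => t ∉ τ) = ∅ := by
      apply Finset.filter_eq_empty_iff.mpr
      intro t ht
      simp only [not_not]
      rw [Finset.mem_Ico] at ht
      exact h t ht.1 (by omega)
    rw [this] at hadd
    simp at hadd
    omega
  · intro h
    have hc : ((Finset.Ico a b).filter (fun t => t ∉ τ)).card = 0 := by omega
    refine ⟨by omega, hab, hb, fun t ht1 ht2 => ?_⟩
    by_contra htτ
    have : t ∈ (Finset.Ico a b).filter (fun t => t ∉ τ) := by
      rw [Finset.mem_filter, Finset.mem_Ico]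
      exact ⟨⟨ht1, by omega⟩, htτ⟩
    rw [Finset.card_eq_zero] at hc
    simp [hc] at this

lemma strictMono_le_add {k : ℕ} {f : Fin k → ℕ} (hf : StrictMono f) :
    ∀ (m : ℕ) (s t : Fin k), (t : ℕ) = (s : ℕ) + m → f s + m ≤ f t := by
  intro m
  induction m with
  | zero =>
    intro s t h
    have : s = t := Fin.ext (by omega)
    rw [this]
    omega
  | succ n ih =>
    intro s t h
    have hlt : (s : ℕ) + n < k := by have := t.isLt; omega
    have h1 := ih s ⟨(s : ℕ) + n, hlt⟩ rfl
    have h2 : f ⟨(s : ℕ) + n, hlt⟩ < f t := hf (by simp [Fin.lt_def]; omega)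
    omega

lemma rowLabel_lo {I k : ℕ} (i : Fin k → ℕ) (p : Fin (k + I)) (h : (p : ℕ) < I) :
    rowLabel I k i p = (p : ℕ) + 1 := dif_pos h

lemma rowLabel_hi {I k : ℕ} (i : Fin k → ℕ) (p : Fin (k + I)) (h : I ≤ (p : ℕ)) :
    rowLabel I k i p = i ⟨(p : ℕ) - I, by have := p.isLt; omega⟩ :=
  dif_neg (by omega)

lemma colLabel_lo {N I k : ℕ} (i : Fin k → ℕ) (q : Fin (k + I)) (h : (q : ℕ) < k) :
    colLabel N I k i q = i ⟨(q : ℕ), h⟩ := dif_pos h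

lemma colLabel_hi {N I k : ℕ} (i : Fin k → ℕ) (q : Fin (k + I)) (h : k ≤ (q : ℕ)) :
    colLabel N I k i q = N - I + 1 + ((q : ℕ) - k) := dif_neg (by omega)

lemma rowLabel_injective {N I k : ℕ} (i : Fin k → ℕ) (hmono : StrictMono i)
    (hrange : ∀ t, I + 1 ≤ i t ∧ i t ≤ N - I) :
    Function.Injective (rowLabel I k i) := by
  intro p p' h
  rcases lt_or_ge (p : ℕ) I with hp | hp <;> rcases lt_or_ge (p' : ℕ) I with hp' | hp'
  · rw [rowLabel_lo i p hp, rowLabel_lo i p' hp'] at h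
    exact Fin.ext (by omega)
  · rw [rowLabel_lo i p hp, rowLabel_hi i p' hp'] at h
    have := (hrange ⟨(p' : ℕ) - I, by have := p'.isLt; omega⟩).1
    omega
  · rw [rowLabel_hi i p hp, rowLabel_lo i p' hp'] at h
    have := (hrange ⟨(p : ℕ) - I, by have := p.isLt; omega⟩).1
    omega
  · rw [rowLabel_hi i p hp, rowLabel_hi i p' hp'] at h
    have hv := hmono.injective h
    simp only [Fin.mk.injEq] at hv
    exact Fin.ext (by omega)

lemma colLabel_injective {N I k : ℕ} (i : Fin k → ℕ) (hmono : StrictMono i)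
    (hrange : ∀ t, I + 1 ≤ i t ∧ i t ≤ N - I) :
    Function.Injective (colLabel N I k i) := by
  intro q q' h
  rcases lt_or_ge (q : ℕ) k with hq | hq <;> rcases lt_or_ge (q' : ℕ) k with hq' | hq'
  · rw [colLabel_lo i q hq, colLabel_lo i q' hq'] at h
    have := hmono.injective h
    simp only [Fin.mk.injEq] at this
    exact Fin.ext this
  · rw [colLabel_lo i q hq, colLabel_hi i q' hq'] at h
    have := (hrange ⟨(q : ℕ), hq⟩).2
    omega
  · rw [colLabel_hi i q hq, colLabel_lo i q' hq'] at h
    have := (hrange ⟨(q' : ℕ), hq'⟩).2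
    omega
  · rw [colLabel_hi i q hq, colLabel_hi i q' hq'] at h
    exact Fin.ext (by omega)

lemma amat_ne_zero {N I k : ℕ} {τ : Finset ℕ} {i : Fin k → ℕ} {p q : Fin (k + I)}
    (h : Amat N I k τ i p q ≠ 0) :
    rowLabel I k i p < colLabel N I k i q ∧
      ¬ Stau N τ (rowLabel I k i p) (colLabel N I k i q) := by
  by_cases h1 : rowLabel I k i p < colLabel N I k i q
  · refine ⟨h1, fun hS => h ?_⟩
    simp only [Amat, Matrix.of_apply, if_pos h1, xcoord, if_pos hS]
  · exact absurd (by simp only [Amat, Matrix.of_apply, if_neg h1]) h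

lemma card_filter_hi (k I : ℕ) :
    (Finset.univ.filter (fun q : Fin (k + I) => k ≤ (q : ℕ))).card = I := by
  have h : (Finset.univ.filter (fun q : Fin (k + I) => k ≤ (q : ℕ))).card
      = (Finset.univ : Finset (Fin I)).card := by
    refine Finset.card_bij'
      (fun (q : Fin (k + I)) (hq : q ∈ Finset.univ.filter (fun q : Fin (k + I) => k ≤ (q : ℕ))) =>
        (⟨(q : ℕ) - k, by
          have h1 := q.isLt
          have h2 := (Finset.mem_filter.mp hq).2
          omega⟩ : Fin I))
      (fun (t : Fin I) _ => (⟨(t : ℕ) + k, by have := t.isLt; omega⟩ : Fin (k + I))) ?_ ?_ ?_ ?_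
    · intro q hq; exact Finset.mem_univ _
    · intro t ht
      rw [Finset.mem_filter]
      exact ⟨Finset.mem_univ _, by simp⟩
    · intro q hq
      have h2 := (Finset.mem_filter.mp hq).2
      exact Fin.ext (by simp; omega)
    · intro t ht; exact Fin.ext (by simp)
  simpa using h

lemma det_Amat_zero (N I : ℕ) (τ : Finset ℕ) (k : ℕ) (i : Fin k → ℕ)
    (hmono : StrictMono i) (hrange : ∀ t, I + 1 ≤ i t ∧ i t ≤ N - I)
    (hNI : 2 * I ≤ N) (v : ℕ)
    (hbig : I < (Finset.univ.filter (fun t : Fin k => gapCount I τ (i t) = v)).card) :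
    (Amat N I k τ i).det = 0 := by
  rw [Matrix.det_apply]
  apply Finset.sum_eq_zero
  intro σ _
  suffices h : ∏ x, Amat N I k τ i (σ x) x = 0 by rw [h, smul_zero]
  by_contra hne
  have hnz : ∀ x, Amat N I k τ i (σ x) x ≠ 0 := by
    intro x hx
    exact hne (Finset.prod_eq_zero (Finset.mem_univ x) hx)
  -- rows with row index ≥ I and gapCount ≥ v
  set R : Finset (Fin (k + I)) :=
    Finset.univ.filter (fun p => I ≤ (p : ℕ) ∧ v ≤ gapCount I τ (rowLabel I k i p)) with hR
  set C : Finset (Fin (k + I)) :=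
    Finset.univ.filter (fun q => k ≤ (q : ℕ) ∨
      ((q : ℕ) < k ∧ v + 1 ≤ gapCount I τ (colLabel N I k i q))) with hC
  have hmaps : ∀ p ∈ R, σ.symm p ∈ C := by
    intro p hp
    rw [hR, Finset.mem_filter] at hp
    obtain ⟨-, hpI, hpg⟩ := hp
    have hent := amat_ne_zero (p := p) (q := σ.symm p) (by
      have := hnz (σ.symm p)
      rwa [Equiv.apply_symm_apply] at this)
    rw [hC, Finset.mem_filter]
    refine ⟨Finset.mem_univ _, ?_⟩
    rcases lt_or_ge ((σ.symm p : Fin (k + I)) : ℕ) k with hq | hq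
    · right
      refine ⟨hq, ?_⟩
      rw [rowLabel_hi i p hpI] at hent hpg
      rw [colLabel_lo i _ hq] at hent ⊢
      set a := i ⟨(p : ℕ) - I, by have := p.isLt; omega⟩ with ha
      set b := i ⟨((σ.symm p : Fin (k + I)) : ℕ), hq⟩ with hb
      have hale : I + 1 ≤ a := (hrange _).1
      have hbN : b ≤ N := by have := (hrange ⟨_, hq⟩).2; omega
      have hne' : gapCount I τ a ≠ gapCount I τ b := by
        intro hEq
        exact hent.2 ((stau_iff_gapCount N I τ hale hent.1 hbN).mpr hEq)
      have hmle : gapCount I τ a ≤ gapCount I τ b := gapCount_mono I τ hent.1.le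
      omega
    · exact Or.inl hq
  have hinj : Set.InjOn (fun p => σ.symm p) R := fun a _ b _ h => σ.symm.injective h
  have hcard : R.card ≤ C.card := Finset.card_le_card_of_injOn _ hmaps hinj
  -- compute cardinalities
  have hRcard : R.card = (Finset.univ.filter (fun t : Fin k => v ≤ gapCount I τ (i t))).card := by
    refine Finset.card_bij' (fun (p : Fin (k+I)) (hp : p ∈ R) => (⟨(p : ℕ) - I, by
        have h1 := p.isLt
        have h2 := (Finset.mem_filter.mp (hR ▸ hp)).2.1
        omega⟩ : Fin k))
      (fun (t : Fin k) _ => (⟨(t : ℕ) + I, by have := t.isLt; omega⟩ : Fin (k + I))) ?_ ?_ ?_ ?_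
    · intro p hp
      rw [hR, Finset.mem_filter] at hp
      rw [Finset.mem_filter]
      refine ⟨Finset.mem_univ _, ?_⟩
      rw [rowLabel_hi i p hp.2.1] at hp
      exact hp.2.2
    · intro t ht
      rw [Finset.mem_filter] at ht
      rw [hR, Finset.mem_filter]
      refine ⟨Finset.mem_univ _, by simp, ?_⟩
      rw [rowLabel_hi i _ (by simp)]
      convert ht.2 using 3
      exact Fin.ext (by simp)
    · intro p hp
      rw [hR, Finset.mem_filter] at hp
      exact Fin.ext (by simp; omega)
    · intro t ht
      exact Fin.ext (by simp)
  have hCcard : C.card =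
      (Finset.univ.filter (fun t : Fin k => v + 1 ≤ gapCount I τ (i t))).card + I := by
    have hsplit : C = (Finset.univ.filter (fun q : Fin (k + I) =>
        (q : ℕ) < k ∧ v + 1 ≤ gapCount I τ (colLabel N I k i q))) ∪
        (Finset.univ.filter (fun q : Fin (k + I) => k ≤ (q : ℕ))) := by
      rw [hC, ← Finset.filter_or]
      apply Finset.filter_congr
      intro q _
      constructor
      · tauto
      · tauto
    rw [hsplit, Finset.card_union_of_disjoint (by
      rw [Finset.disjoint_left]
      intro q hq hq'
      rw [Finset.mem_filter] at hq hq'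
      omega)]
    congr 1
    · refine Finset.card_bij' (fun (q : Fin (k+I)) (hq : q ∈ Finset.univ.filter (fun q : Fin (k + I) =>
        (q : ℕ) < k ∧ v + 1 ≤ gapCount I τ (colLabel N I k i q))) =>
          (⟨(q : ℕ), (Finset.mem_filter.mp hq).2.1⟩ : Fin k))
        (fun (t : Fin k) _ => (⟨(t : ℕ), by have := t.isLt; omega⟩ : Fin (k + I))) ?_ ?_ ?_ ?_
      · intro q hq
        rw [Finset.mem_filter] at hq
        rw [Finset.mem_filter]
        refine ⟨Finset.mem_univ _, ?_⟩
        · have := hq.2.2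
          rwa [colLabel_lo i q hq.2.1] at this
      · intro t ht
        rw [Finset.mem_filter] at ht
        rw [Finset.mem_filter]
        refine ⟨Finset.mem_univ _, by simp [t.isLt], ?_⟩
        rw [colLabel_lo i _ (by simp [t.isLt])]
        convert ht.2 using 3
      · intro q hq; exact Fin.ext (by simp)
      · intro t ht; exact Fin.ext (by simp)
    · exact card_filter_hi k I
  -- split the R-count
  have hsplit2 :
      (Finset.univ.filter (fun t : Fin k => v ≤ gapCount I τ (i t))).card =
      (Finset.univ.filter (fun t : Fin k => gapCount I τ (i t) = v)).card +
      (Finset.univ.filter (fun t : Fin k => v + 1 ≤ gapCount I τ (i t))).card := by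
    have h1 : Finset.univ.filter (fun t : Fin k => gapCount I τ (i t) = v) =
        (Finset.univ.filter (fun t : Fin k => v ≤ gapCount I τ (i t))).filter
          (fun t => gapCount I τ (i t) = v) := by
      rw [Finset.filter_filter]
      apply Finset.filter_congr
      intro t _
      constructor
      · exact fun h => ⟨le_of_eq h.symm, h⟩
      · exact fun h => h.2
    have h2 : Finset.univ.filter (fun t : Fin k => v + 1 ≤ gapCount I τ (i t)) =
        (Finset.univ.filter (fun t : Fin k => v ≤ gapCount I τ (i t))).filter
          (fun t => ¬ gapCount I τ (i t) = v) := by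
      rw [Finset.filter_filter]
      apply Finset.filter_congr
      intro t _
      constructor
      · intro h; omega
      · intro h; omega
    rw [h1, h2, Finset.card_filter_add_card_filter_not]
  omega

lemma card_le_sel (N I : ℕ) (hI : 1 ≤ I) (hNI : 2 * I ≤ N) (τ : Finset ℕ)
    (S : Finset ℕ) (hS : S ⊆ Finset.Icc (I + 1) (N - I))
    (hfib : ∀ v, (S.filter (fun a => gapCount I τ a = v)).card ≤ I) :
    S.card ≤ N - 2 * I -
      ((Finset.Icc (I + 1) (N - 2 * I)).filter (fun a => Stau N τ a (a + I))).card := by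
  classical
  set T : Finset ℕ := Finset.Icc (I + 1) (N - I) with hT
  set D : Finset ℕ := (Finset.Icc (I + 1) (N - 2 * I)).filter (fun a => Stau N τ a (a + I))
    with hD
  have hDT : D ⊆ T := by
    intro a ha
    rw [hD, Finset.mem_filter, Finset.mem_Icc] at ha
    rw [hT, Finset.mem_Icc]
    omega
  have hTcard : T.card = N - 2 * I := by
    rw [hT, Nat.card_Icc]; omega
  have hSelcard : (T \ D).card = N - 2 * I - D.card := by
    rw [Finset.card_sdiff_of_subset hDT, hTcard]
  rw [← hSelcard]
  -- fiberwise comparison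
  set g : ℕ → ℕ := gapCount I τ with hg
  have hSsum : S.card = ∑ v ∈ T.image g, (S.filter (fun a => g a = v)).card :=
    Finset.card_eq_sum_card_fiberwise (fun x hx => Finset.mem_image_of_mem g (hS hx))
  have hSelsum : (T \ D).card = ∑ v ∈ T.image g, ((T \ D).filter (fun a => g a = v)).card :=
    Finset.card_eq_sum_card_fiberwise
      (fun x hx => Finset.mem_image_of_mem g (Finset.sdiff_subset hx))
  rw [hSsum, hSelsum]
  apply Finset.sum_le_sum
  intro v hv
  -- the fiber of T over v
  set Tv : Finset ℕ := T.filter (fun a => g a = v) with hTv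
  rcases Finset.eq_empty_or_nonempty Tv with hemp | hne
  · have : S.filter (fun a => g a = v) ⊆ Tv :=
      Finset.filter_subset_filter _ hS
    rw [hemp, Finset.subset_empty] at this
    rw [this]
    simp
  · set l : ℕ := Tv.min' hne with hl
    set r : ℕ := Tv.max' hne with hr
    have hlT : l ∈ Tv := Tv.min'_mem hne
    have hrT : r ∈ Tv := Tv.max'_mem hne
    have hlr : l ≤ r := Tv.min'_le _ hrT
    have hminle : ∀ a ∈ Tv, l ≤ a ∧ a ≤ r := fun a ha => ⟨Tv.min'_le _ ha, Tv.le_max' _ ha⟩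
    clear_value l r
    have hlbound : I + 1 ≤ l ∧ l ≤ N - I ∧ g l = v := by
      have := hlT
      rw [hTv, Finset.mem_filter, hT, Finset.mem_Icc] at this
      tauto
    have hrbound : I + 1 ≤ r ∧ r ≤ N - I ∧ g r = v := by
      have := hrT
      rw [hTv, Finset.mem_filter, hT, Finset.mem_Icc] at this
      tauto
    have hTvIcc : ∀ a, a ∈ Tv ↔ l ≤ a ∧ a ≤ r := by
      intro a
      constructor
      · intro ha
        exact hminle a ha
      · rintro ⟨h1, h2⟩
        rw [hTv, Finset.mem_filter, hT, Finset.mem_Icc]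
        refine ⟨⟨by omega, by omega⟩, ?_⟩
        have m1 : g l ≤ g a := gapCount_mono I τ h1
        have m2 : g a ≤ g r := gapCount_mono I τ h2
        omega
    have hTvcard : Tv.card = r + 1 - l := by
      have : Tv = Finset.Icc l r := Finset.ext (fun a => by
        rw [hTvIcc a, Finset.mem_Icc])
      rw [this, Nat.card_Icc]
    -- the fiber of D over v
    have hDv : D.filter (fun a => g a = v) = Finset.Icc l (r - I) := by
      ext a
      rw [Finset.mem_filter, hD, Finset.mem_filter, Finset.mem_Icc, Finset.mem_Icc]
      constructor
      · rintro ⟨⟨⟨ha1, ha2⟩, hstau⟩, hgv⟩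
        have haT : a ∈ Tv := by
          rw [hTv, Finset.mem_filter, hT, Finset.mem_Icc]
          exact ⟨⟨ha1, by omega⟩, hgv⟩
        have h1 : l ≤ a := (hTvIcc a).mp haT |>.1
        have hgaI : g a = g (a + I) :=
          (stau_iff_gapCount N I τ (by omega) (by omega) (by omega)).mp hstau
        have haIT : a + I ∈ Tv := by
          rw [hTv, Finset.mem_filter, hT, Finset.mem_Icc]
          exact ⟨⟨by omega, by omega⟩, by omega⟩
        have h2 : a + I ≤ r := (hTvIcc _).mp haIT |>.2
        exact ⟨h1, by omega⟩
      · rintro ⟨h1, h2⟩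
        have har : a ≤ r := by omega
        have haT : a ∈ Tv := (hTvIcc a).mpr ⟨h1, har⟩
        have haI : a + I ≤ r := by omega
        have haIT : a + I ∈ Tv := (hTvIcc _).mpr ⟨by omega, haI⟩
        have hgT : g a = v := by
          have := haT; rw [hTv, Finset.mem_filter] at this; exact this.2
        have hgTI : g (a + I) = v := by
          have := haIT; rw [hTv, Finset.mem_filter] at this; exact this.2
        have haN : a + I ≤ N := by omega
        have hstau : Stau N τ a (a + I) := by
          apply (stau_iff_gapCount N I τ (by omega) (by omega) haN).mpr
          rw [← hg]
          omega
        refine ⟨⟨⟨by omega, ?_⟩, hstau⟩, hgT⟩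
        · have := haIT
          rw [hTv, Finset.mem_filter, hT, Finset.mem_Icc] at this
          omega
    -- the fiber of T \ D
    have hSelfib : (T \ D).filter (fun a => g a = v) =
        Tv \ (D.filter (fun a => g a = v)) := by
      ext a
      simp only [Finset.mem_filter, Finset.mem_sdiff, hTv]
      tauto
    have hDvsub : D.filter (fun a => g a = v) ⊆ Tv := by
      intro a ha
      rw [Finset.mem_filter] at ha
      rw [hTv, Finset.mem_filter]
      exact ⟨hDT ha.1, ha.2⟩
    have hSelfibcard : ((T \ D).filter (fun a => g a = v)).card =
        Tv.card - (D.filter (fun a => g a = v)).card := by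
      rw [hSelfib, Finset.card_sdiff_of_subset hDvsub]
    have hDvcard : (D.filter (fun a => g a = v)).card = r - I + 1 - l := by
      rw [hDv, Nat.card_Icc]
    have hSfibT : (S.filter (fun a => g a = v)).card ≤ Tv.card :=
      Finset.card_le_card (Finset.filter_subset_filter _ hS)
    have hSfibI : (S.filter (fun a => g a = v)).card ≤ I := hfib v
    have hIl : I + 1 ≤ l := hlbound.1
    omega

lemma mPoly_zero_dir
    (N I : ℕ) (hI : 1 ≤ I) (hNI : 2 * I ≤ N) (τ : Finset ℕ) (k : ℕ)
    (hlt : N - 2 * I - ((Finset.Icc (I + 1) (N - 2 * I)).filter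
        fun a => Stau N τ a (a + I)).card < k) :
    mPoly N I k τ = 0 := by
  unfold mPoly
  apply Finset.sum_eq_zero
  intro i hi
  rw [tupleSet, Finset.mem_filter] at hi
  obtain ⟨-, hmono, hrange⟩ := hi
  have hfmono : StrictMono (fun t => ((i t : ℕ))) := fun a b hab => hmono hab
  have hex : ∃ v, I <
      (Finset.univ.filter (fun t : Fin k => gapCount I τ ((i t : ℕ)) = v)).card := by
    by_contra hno
    push_neg at hno
    set S : Finset ℕ := Finset.univ.image (fun t => ((i t : ℕ))) with hS
    have hScard : S.card = k := by
      rw [hS, Finset.card_image_of_injective _ hfmono.injective, Finset.card_univ,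
        Fintype.card_fin]
    have hSsub : S ⊆ Finset.Icc (I + 1) (N - I) := by
      intro a ha
      rw [hS, Finset.mem_image] at ha
      obtain ⟨t, -, rfl⟩ := ha
      rw [Finset.mem_Icc]; exact hrange t
    have hfib : ∀ v, (S.filter (fun a => gapCount I τ a = v)).card ≤ I := by
      intro v
      rw [hS, Finset.filter_image, Finset.card_image_of_injective _ hfmono.injective]
      exact hno v
    have := card_le_sel N I hI hNI τ S hSsub hfib
    omega
  obtain ⟨v, hv⟩ := hex
  exact det_Amat_zero N I τ k _ hfmono hrange hNI v hv

lemma mPoly_ne_zero_dir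
    (N I : ℕ) (hI : 1 ≤ I) (hNI : 2 * I ≤ N) (τ : Finset ℕ)
    (hτ2 : I ∉ τ) (hτ4 : N - I ∉ τ) (k : ℕ)
    (hle : k ≤ N - 2 * I - ((Finset.Icc (I + 1) (N - 2 * I)).filter
        fun a => Stau N τ a (a + I)).card) :
    mPoly N I k τ ≠ 0 := by
  classical
  set T : Finset ℕ := Finset.Icc (I + 1) (N - I) with hT
  set D : Finset ℕ := (Finset.Icc (I + 1) (N - 2 * I)).filter (fun a => Stau N τ a (a + I))
    with hD
  have hDT : D ⊆ T := by
    intro a ha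
    rw [hD, Finset.mem_filter, Finset.mem_Icc] at ha
    rw [hT, Finset.mem_Icc]
    omega
  have hTcard : T.card = N - 2 * I := by
    rw [hT, Nat.card_Icc]; omega
  have hSelcard : (T \ D).card = N - 2 * I - D.card := by
    rw [Finset.card_sdiff_of_subset hDT, hTcard]
  have hkcard : k ≤ (T \ D).card := by omega
  obtain ⟨F, hFSel, hFcard⟩ := Finset.exists_subset_card_eq hkcard
  set e' : Fin k → ℕ := fun t => (F.orderEmbOfFin hFcard t : ℕ) with he'
  have he'mono : StrictMono e' := fun a b hab => (F.orderEmbOfFin hFcard).strictMono hab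
  have he'F : ∀ t, e' t ∈ F := fun t => F.orderEmbOfFin_mem hFcard t
  have he'Sel : ∀ t, e' t ∈ T \ D := fun t => hFSel (he'F t)
  have he'range : ∀ t, I + 1 ≤ e' t ∧ e' t ≤ N - I := by
    intro t
    have := he'Sel t
    rw [Finset.mem_sdiff, hT, Finset.mem_Icc] at this
    exact this.1
  have he'notD : ∀ t, e' t ∉ D := by
    intro t
    have := he'Sel t
    rw [Finset.mem_sdiff] at this
    exact this.2
  -- the valuation
  set val : ℕ × ℕ → ℂ := fun ab =>
    if ∃ p : Fin (k + I), ab = (rowLabel I k e' p, colLabel N I k e' p) then 1 else 0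
    with hval
  -- diagonal entries are generic
  have hdiag : ∀ p : Fin (k + I), rowLabel I k e' p < colLabel N I k e' p ∧
      ¬ Stau N τ (rowLabel I k e' p) (colLabel N I k e' p) := by
    intro p
    rcases lt_or_ge (p : ℕ) I with hpI | hpI
    · rw [rowLabel_lo e' p hpI]
      rcases lt_or_ge (p : ℕ) k with hpk | hpk
      · rw [colLabel_lo e' p hpk]
        have hrg := he'range ⟨(p : ℕ), hpk⟩
        refine ⟨by omega, fun hS => hτ2 (hS.2.2.2 I (by omega) (by omega))⟩
      · rw [colLabel_hi e' p hpk]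
        refine ⟨by omega, fun hS => hτ2 (hS.2.2.2 I (by omega) (by omega))⟩
    · rw [rowLabel_hi e' p hpI]
      set t : Fin k := ⟨(p : ℕ) - I, by have := p.isLt; omega⟩ with ht
      have hrg := he'range t
      rcases lt_or_ge (p : ℕ) k with hpk | hpk
      · rw [colLabel_lo e' p hpk]
        set t' : Fin k := ⟨(p : ℕ), hpk⟩ with ht'
        have hgap : e' t + I ≤ e' t' :=
          strictMono_le_add he'mono I t t' (by rw [ht, ht']; simp; omega)
        have hrg' := he'range t'
        refine ⟨by omega, fun hS => ?_⟩
        have hDmem : e' t ∈ D := by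
          rw [hD, Finset.mem_filter, Finset.mem_Icc]
          refine ⟨⟨by omega, by omega⟩, ?_, ?_, by omega, ?_⟩
          · omega
          · omega
          · intro u hu1 hu2
            exact hS.2.2.2 u hu1 (by omega)
        exact he'notD t hDmem
      · rw [colLabel_hi e' p hpk]
        refine ⟨by omega, fun hS => hτ4 (hS.2.2.2 (N - I) (by omega) (by omega))⟩
  -- the matrix for e' maps to the identity
  have hAstar : (Amat N I k τ e').map (MvPolynomial.eval val) = 1 := by
    ext p q
    rw [Matrix.map_apply]
    by_cases hpq : q = p
    · subst hpq
      rw [Matrix.one_apply_eq]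
      have hd := hdiag q
      show MvPolynomial.eval val (Amat N I k τ e' q q) = 1
      simp only [Amat, Matrix.of_apply, if_pos hd.1, xcoord, if_neg hd.2]
      rw [MvPolynomial.eval_X, hval]
      exact if_pos ⟨q, rfl⟩
    · rw [Matrix.one_apply_ne' hpq]
      by_cases hrc : rowLabel I k e' p < colLabel N I k e' q
      · simp only [Amat, Matrix.of_apply, if_pos hrc, xcoord]
        by_cases hS : Stau N τ (rowLabel I k e' p) (colLabel N I k e' q)
        · rw [if_pos hS, map_zero]
        · rw [if_neg hS, MvPolynomial.eval_X, hval]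
          apply if_neg
          rintro ⟨p', hp'⟩
          rw [Prod.mk.injEq] at hp'
          have h1 : p = p' := rowLabel_injective (N := N) e' he'mono he'range hp'.1
          have h2 : q = p' := colLabel_injective e' he'mono he'range hp'.2
          exact hpq (h2.trans h1.symm)
      · simp only [Amat, Matrix.of_apply, if_neg hrc, map_zero]
  have hdetstar : MvPolynomial.eval val (Amat N I k τ e').det = 1 := by
    rw [RingHom.map_det, RingHom.mapMatrix_apply, hAstar, Matrix.det_one]
  -- istar
  have he'lt : ∀ t, e' t < N + 1 := by
    intro t
    have := (he'range t).2
    omega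
  set istar : Fin k → Fin (N + 1) := fun t => ⟨e' t, he'lt t⟩ with histar_def
  have histar : istar ∈ tupleSet N I k := by
    rw [tupleSet, Finset.mem_filter]
    refine ⟨Finset.mem_univ _, fun a b hab => ?_, fun t => he'range t⟩
    simp only [histar_def, Fin.lt_def]
    exact he'mono hab
  have histar_coe : (fun t => ((istar t : ℕ))) = e' := rfl
  -- other tuples die
  have hother : ∀ i ∈ tupleSet N I k, i ≠ istar →
      MvPolynomial.eval val (Amat N I k τ fun t => ((i t : ℕ))).det = 0 := by
    intro i hi hine
    rw [tupleSet, Finset.mem_filter] at hi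
    obtain ⟨-, hmono, hrange⟩ := hi
    set f : Fin k → ℕ := fun t => ((i t : ℕ)) with hf
    have hfmono : StrictMono f := fun a b hab => hmono hab
    set G : Finset ℕ := Finset.univ.image f with hG
    have hGcard : G.card = k := by
      rw [hG, Finset.card_image_of_injective _ hfmono.injective, Finset.card_univ,
        Fintype.card_fin]
    have hex : ∃ t0 : Fin k, f t0 ∉ F := by
      by_contra hno
      push_neg at hno
      have hGF : G ⊆ F := by
        intro a ha
        rw [hG, Finset.mem_image] at ha
        obtain ⟨t, -, rfl⟩ := ha
        exact hno t
      have : G = F := Finset.eq_of_subset_of_card_le hGF (by omega)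
      have hfF : ∀ x, f x ∈ F := fun x => this ▸ (Finset.mem_image_of_mem f (Finset.mem_univ x))
      have := Finset.orderEmbOfFin_unique hFcard hfF hfmono
      apply hine
      funext t
      apply Fin.ext
      show f t = e' t
      rw [this]
    obtain ⟨t0, ht0⟩ := hex
    set p0 : Fin (k + I) := ⟨(t0 : ℕ) + I, by have := t0.isLt; omega⟩ with hp0
    have hrow0 : rowLabel I k f p0 = f t0 := by
      rw [rowLabel_hi f p0 (by simp [hp0])]
      congr 1
      exact Fin.ext (by simp [hp0])
    rw [RingHom.map_det, RingHom.mapMatrix_apply]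
    apply Matrix.det_eq_zero_of_row_eq_zero p0
    intro q
    rw [Matrix.map_apply]
    by_cases hrc : rowLabel I k f p0 < colLabel N I k f q
    · simp only [Amat, Matrix.of_apply, if_pos hrc, xcoord]
      by_cases hS : Stau N τ (rowLabel I k f p0) (colLabel N I k f q)
      · rw [if_pos hS, map_zero]
      · rw [if_neg hS, MvPolynomial.eval_X, hval]
        apply if_neg
        rintro ⟨p', hp'⟩
        rw [Prod.mk.injEq] at hp'
        have hfirst := hp'.1
        rw [hrow0] at hfirst
        rcases lt_or_ge (p' : ℕ) I with hp'I | hp'I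
        · rw [rowLabel_lo e' p' hp'I] at hfirst
          have hft : I + 1 ≤ f t0 := (hrange t0).1
          omega
        · rw [rowLabel_hi e' p' hp'I] at hfirst
          exact ht0 (hfirst ▸ he'F _)
    · simp only [Amat, Matrix.of_apply, if_neg hrc, map_zero]
  -- conclude
  intro h0
  have := congrArg (MvPolynomial.eval val) h0
  rw [map_zero] at this
  rw [mPoly, map_sum] at this
  rw [Finset.sum_eq_single_of_mem istar histar (fun i hi hne => hother i hi hne)] at this
  rw [histar_coe, hdetstar] at this
  exact one_ne_zero this

/-- in the Richardson pattern setup, with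
`d = #{a : I+1 ≤ a ≤ N−2I, (a, a+I) ∈ S_τ}`, one has `m_{k+I} = 0` iff
`k > N − 2I − d` (equivalently, `k + I > λ_1 + ⋯ + λ_I − I` for the shape `λ` of the
associated Richardson tableau, for which `λ_1 + ⋯ + λ_I = N − d`). -/
theorem mPoly_eq_zero_iff
    (N I : ℕ) (hI : 1 ≤ I) (hNI : 2 * I ≤ N) (τ : Finset ℕ)
    (hτsub : ∀ t ∈ τ, 1 ≤ t ∧ t ≤ N - 1)
    (hτ1 : ∀ t : ℕ, 1 ≤ t → t ≤ I - 1 → t ∈ τ) (hτ2 : I ∉ τ)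
    (hτ3 : ∀ t : ℕ, N - I + 1 ≤ t → t ≤ N - 1 → t ∈ τ) (hτ4 : N - I ∉ τ)
    (k : ℕ) (hk : k ≤ N - 2 * I) :
    mPoly N I k τ = 0 ↔
      N - 2 * I - ((Finset.Icc (I + 1) (N - 2 * I)).filter
        fun a => Stau N τ a (a + I)).card < k := by
  constructor
  · intro h0
    by_contra hlt
    push_neg at hlt
    exact mPoly_ne_zero_dir N I hI hNI τ hτ2 hτ4 k hlt h0
  · intro hlt
    exact mPoly_zero_dir N I hI hNI τ k hlt
end
end

section
/- Let n ≥ 1 and let R := ℂ[X(i,j) : 1 ≤ i,j ≤ n] be the multivariate polynomial ring. Let A be an n×n matrix over R such that A(i,j) = X(i,j) whenever i ≤ j+1 (i.e., all entries on or above the first subdiagonal are the corresponding indeterminates), and for every pair with i > j+1, either A(i,j) = X(i,j) or A(i,j) = 0. Then det(A) is an irreducible element of R. -/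
/-!
Expand `det A` along its corner entry `A 0 0 = X y`: `det A = X y * N + Q`, where `N` is the
complementary minor and `Q` the determinant with the corner entry set to `0`; neither involves `y`.
As a polynomial in `y` over the other variables this is linear, hence irreducible as soon as `N`
is prime and does not divide `Q`. The minor `N` has the same shape, so it is prime by induction
(over a UFD irreducible and prime agree). Specializing `A` to the permutation matrix of the
transposition `(0 1)`, which is compatible with the zero pattern, sends `N` to `0` and `Q` to `-1`,
so `N ∤ Q`.
-/

open MvPolynomial

namespace MvPolynomial

variable {σ D : Type*} [CommRing D] [IsDomain D]

theorem irreducible_X_mul_add {y : σ} {a b : MvPolynomial σ D} (ha : Prime a)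
    (hay : y ∉ a.vars) (hby : y ∉ b.vars) (hab : ¬a ∣ b) :
    Irreducible (X y * a + b) := by
  classical
  have hrange (p : MvPolynomial σ D) (hp : y ∉ p.vars) :
      ↑p.vars ⊆ Set.range (Subtype.val : {s // s ≠ y} → σ) := by
    rw [Subtype.range_coe_subtype]
    exact fun s hs (h : s = y) => hp (h ▸ hs)
  obtain ⟨a, rfl⟩ := exists_rename_eq_of_vars_subset_range a _ Subtype.val_injective (hrange a hay)
  obtain ⟨b, rfl⟩ := exists_rename_eq_of_vars_subset_range b _ Subtype.val_injective (hrange b hby)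
  let e := (renameEquiv D (Equiv.optionSubtypeNe y).symm).trans (optionEquivLeft D _)
  have he_X : e (X y) = Polynomial.X := by simp [e]
  have he_rename (p : MvPolynomial {s // s ≠ y} D) :
      e (rename Subtype.val p) = Polynomial.C p := by
    induction p using MvPolynomial.induction_on with
    | C r => simp [e]
    | add p q hp hq => simp only [map_add, hp, hq]
    | mul_X p s hp =>
      rw [map_mul, map_mul, hp, rename_X, map_mul]
      simp [e, Equiv.optionSubtypeNe_symm_of_ne s.2]
  have ha' : Prime a :=
    comap_prime (rename Subtype.val) (killCompl Subtype.val_injective)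
      (killCompl_rename_app _) ha
  rw [← MulEquiv.irreducible_iff e, map_add, map_mul, he_X, he_rename, he_rename, mul_comm]
  exact Polynomial.irreducible_C_mul_X_add_C ha'.ne_zero
    (ha'.irreducible.isRelPrime_iff_not_dvd.2 fun h => hab (map_dvd _ h))

end MvPolynomial

namespace Matrix

variable {R : Type*} [CommRing R]

theorem det_mem_of_forall_mem {ι S : Type*} [Fintype ι] [DecidableEq ι] [SetLike S R]
    [SubringClass S R] {s : S} {M : Matrix ι ι R} (hM : ∀ i j, M i j ∈ s) : M.det ∈ s := by
  rw [det_apply]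
  exact sum_mem fun _ _ => by
    rw [Units.smul_def]
    exact zsmul_mem (prod_mem fun i _ => hM _ _) _

theorem det_eq_mul_det_submatrix_succ_add {n : ℕ} (M : Matrix (Fin (n + 1)) (Fin (n + 1)) R) :
    M.det = M 0 0 * (M.submatrix Fin.succ Fin.succ).det +
      (M.updateRow 0 (Function.update (M 0) 0 0)).det := by
  rw [det_succ_row_zero, det_succ_row_zero (M.updateRow _ _), Fin.sum_univ_succ,
    Fin.sum_univ_succ]
  simp [updateRow_apply, submatrix, Fin.succ_ne_zero]

end Matrix

theorem MvPolynomial.notMem_vars_det {R σ ι : Type*} [CommRing R] [Fintype ι] [DecidableEq ι]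
    {y : σ} {M : Matrix ι ι (MvPolynomial σ R)} (hM : ∀ i j, y ∉ (M i j).vars) :
    y ∉ M.det.vars := by
  have key (p : MvPolynomial σ R) : p ∈ supported R {y}ᶜ ↔ y ∉ p.vars := by
    rw [mem_supported, Set.subset_compl_singleton_iff, Finset.mem_coe]
  exact (key _).1 (Matrix.det_mem_of_forall_mem fun i j => (key _).2 (hM i j))

def IsSubdiagonalPattern {R σ : Type*} [CommSemiring R] {n : ℕ} (v : Fin n × Fin n → σ)
    (A : Matrix (Fin n) (Fin n) (MvPolynomial σ R)) : Prop :=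
  ∀ i j, A i j = X (v (i, j)) ∨ ((j : ℕ) + 1 < i ∧ A i j = 0)

namespace IsSubdiagonalPattern

section CommRing

variable {R σ : Type*} [CommRing R] {n : ℕ} {v : Fin n × Fin n → σ}
  {A : Matrix (Fin n) (Fin n) (MvPolynomial σ R)}

theorem eq_X_of_le (hA : IsSubdiagonalPattern v A) {i j : Fin n} (hij : (i : ℕ) ≤ j + 1) :
    A i j = X (v (i, j)) :=
  (hA i j).resolve_right fun h => by omega

theorem submatrix_succ {v : Fin (n + 1) × Fin (n + 1) → σ}
    {A : Matrix (Fin (n + 1)) (Fin (n + 1)) (MvPolynomial σ R)} (hA : IsSubdiagonalPattern v A) :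
    IsSubdiagonalPattern (v ∘ Prod.map Fin.succ Fin.succ) (A.submatrix Fin.succ Fin.succ) :=
  fun i j => by simpa using hA i.succ j.succ

theorem notMem_vars [Nontrivial R] (hA : IsSubdiagonalPattern v A) (hv : v.Injective)
    {i j : Fin n} {p : Fin n × Fin n} (hp : (i, j) ≠ p) : v p ∉ (A i j).vars := by
  rcases hA i j with h | ⟨-, h⟩ <;> rw [h]
  · rw [vars_X, Finset.mem_singleton]
    exact fun h => hp (hv h).symm
  · simp

theorem map_eval_extend (hA : IsSubdiagonalPattern v A) (hv : v.Injective)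
    (P : Matrix (Fin n) (Fin n) R) (hP : ∀ i j : Fin n, (j : ℕ) + 1 < i → P i j = 0) :
    A.map (eval (Function.extend v (fun p => P p.1 p.2) 0)) = P := by
  ext i j
  rcases hA i j with h | ⟨hij, h⟩
  · simp [h, hv.extend_apply]
  · simp [h, hP i j hij]

theorem not_dvd_det [Nontrivial R] {v : Fin (n + 2) × Fin (n + 2) → σ}
    {A : Matrix (Fin (n + 2)) (Fin (n + 2)) (MvPolynomial σ R)}
    (hA : IsSubdiagonalPattern v A) (hv : v.Injective) :
    ¬(A.submatrix Fin.succ Fin.succ).det ∣ (A.updateRow 0 (Function.update (A 0) 0 0)).det := by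
  set P := (Equiv.swap (0 : Fin (n + 2)) 1).permMatrix R
  have hP : ∀ i j : Fin (n + 2), (j : ℕ) + 1 < i → P i j = 0 := by
    intro i j hij
    have hi0 : i ≠ 0 := by rintro rfl; simp at hij
    have hi1 : i ≠ 1 := by rintro rfl; simp at hij
    simp [P, PEquiv.toMatrix_apply, Equiv.swap_apply_of_ne_of_ne hi0 hi1]
    omega
  set w := Function.extend v (fun p => P p.1 p.2) 0
  have hAw := hA.map_eval_extend hv P hP
  have hN : eval w (A.submatrix Fin.succ Fin.succ).det = 0 := by
    rw [RingHom.map_det, RingHom.mapMatrix_apply, ← Matrix.submatrix_map, hAw]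
    refine Matrix.det_eq_zero_of_row_eq_zero 0 fun j => ?_
    simp [P, PEquiv.toMatrix_apply, (Fin.succ_ne_zero j).symm]
  have hQ : eval w (A.updateRow 0 (Function.update (A 0) 0 0)).det = -1 := by
    have hP00 : P 0 0 = 0 := by simp [P, PEquiv.toMatrix_apply]
    have hrow : eval w ∘ Function.update (A 0) 0 0 = P 0 := by
      funext j
      rcases eq_or_ne j 0 with rfl | hj
      · simp [hP00]
      · simpa [hj] using congrFun (congrFun hAw 0) j
    rw [RingHom.map_det, RingHom.mapMatrix_apply, Matrix.map_updateRow, hrow, hAw,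
      Matrix.updateRow_eq_self, Matrix.det_permutation, Equiv.Perm.sign_swap zero_ne_one]
    simp
  intro hdvd
  have h := map_dvd (eval w) hdvd
  rw [hN, hQ, zero_dvd_iff] at h
  exact neg_ne_zero.2 one_ne_zero h

end CommRing

variable {R σ : Type*} [CommRing R] [IsDomain R] [UniqueFactorizationMonoid R]

theorem prime_det {n : ℕ} {v : Fin (n + 1) × Fin (n + 1) → σ}
    {A : Matrix (Fin (n + 1)) (Fin (n + 1)) (MvPolynomial σ R)}
    (hA : IsSubdiagonalPattern v A) (hv : v.Injective) : Prime A.det := by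
  induction n with
  | zero =>
    rw [Matrix.det_fin_one, hA.eq_X_of_le (by simp)]
    exact X_prime
  | succ n ih =>
    have hN : Prime (A.submatrix Fin.succ Fin.succ).det :=
      ih hA.submatrix_succ
        (hv.comp (Prod.map_injective.2 ⟨Fin.succ_injective _, Fin.succ_injective _⟩))
    have hNvars : v (0, 0) ∉ (A.submatrix Fin.succ Fin.succ).det.vars :=
      notMem_vars_det fun i j => hA.notMem_vars hv (by simp [Fin.succ_ne_zero])
    have hQvars : v (0, 0) ∉ (A.updateRow 0 (Function.update (A 0) 0 0)).det.vars := by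
      refine notMem_vars_det fun i j => ?_
      rcases eq_or_ne i 0 with rfl | hi
      · rcases eq_or_ne j 0 with rfl | hj
        · simp
        · simpa [hj] using hA.notMem_vars hv (p := (0, 0)) (by simp [hj])
      · simpa [hi] using hA.notMem_vars hv (p := (0, 0)) (by simp [hi])
    rw [Matrix.det_eq_mul_det_submatrix_succ_add, hA.eq_X_of_le (by simp),
      ← UniqueFactorizationMonoid.irreducible_iff_prime]
    exact irreducible_X_mul_add hN hNvars hQvars (hA.not_dvd_det hv)

end IsSubdiagonalPattern

/-- let `A` be an `n × n` matrix over `ℂ[X(i,j) : 1 ≤ i,j ≤ n]` whose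
entries on or above the first subdiagonal (`i ≤ j + 1`) are the corresponding
indeterminates `X(i,j)`, and whose remaining entries are each either `X(i,j)` or `0`.
Then `det A` is irreducible. -/
theorem det_irreducible_of_subdiagonal_pattern
    (n : ℕ) (hn : 1 ≤ n)
    (A : Matrix (Fin n) (Fin n) (MvPolynomial (Fin n × Fin n) ℂ))
    (hupper : ∀ i j : Fin n, (i : ℕ) ≤ (j : ℕ) + 1 → A i j = X (i, j))
    (hlower : ∀ i j : Fin n, (j : ℕ) + 1 < (i : ℕ) →
      A i j = X (i, j) ∨ A i j = 0) :
    Irreducible A.det := by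
  obtain ⟨n, rfl⟩ : ∃ m, n = m + 1 := ⟨n - 1, by omega⟩
  have hA : IsSubdiagonalPattern id A := fun i j => by
    by_cases hij : (i : ℕ) ≤ j + 1
    · exact .inl (hupper i j hij)
    · exact (hlower i j (by omega)).imp id fun h => ⟨by omega, h⟩
  exact (hA.prime_det Function.injective_id).irreducible
end

section
/- Let ι be a type, R := ℂ[X_v : v ∈ ι], and let A be an n×n matrix over R each of whose entries is either 0 or a single indeterminate X_v, distinct nonzero entries involving pairwise distinct indeterminates. Suppose det(A) = p·q with p, q ∈ R. Then for every row index i, either no indeterminate occurring among the entries A(i,1),…,A(i,n) occurs in p, or no such indeterminate occurs in q; and likewise for every column index j, either no indeterminate occurring among A(1,j),…,A(n,j) occurs in p, or none occurs in q. In other words, p and q are polynomials in the entries of disjoint sets of rows and of disjoint sets of columns of A. -/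
open MvPolynomial

open Classical in
/-- Substitution sending `X v ↦ C (X v) * t` for `v ∈ S` and `X v ↦ C (X v)` otherwise. -/
noncomputable def detAuxPhi (ι : Type*) (S : Set ι) :
    MvPolynomial ι ℂ →ₐ[ℂ] Polynomial (MvPolynomial ι ℂ) :=
  aeval (fun v => if v ∈ S then Polynomial.C (X v) * Polynomial.X else Polynomial.C (X v))

open Classical in
lemma detAuxPhi_X (ι : Type*) (S : Set ι) (v : ι) :
    detAuxPhi ι S (X v) =
      if v ∈ S then Polynomial.C (X v) * Polynomial.X else Polynomial.C (X v) := by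
  simp [detAuxPhi]

lemma detAuxPhi_eval_one (ι : Type*) (S : Set ι) (f : MvPolynomial ι ℂ) :
    Polynomial.eval 1 (detAuxPhi ι S f) = f := by
  classical
  have : (Polynomial.evalRingHom (1 : MvPolynomial ι ℂ)).comp
      (detAuxPhi ι S).toRingHom = RingHom.id _ := by
    apply MvPolynomial.ringHom_ext
    · intro r
      simp [detAuxPhi]
    · intro v
      simp [detAuxPhi_X]
      split <;> simp
  exact congrArg (fun g => g f) this |>.trans rfl

lemma detAuxPhi_ne_zero (ι : Type*) (S : Set ι) {f : MvPolynomial ι ℂ} (hf : f ≠ 0) :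
    detAuxPhi ι S f ≠ 0 := by
  intro h
  apply hf
  have := detAuxPhi_eval_one ι S f
  rw [h] at this
  simpa using this.symm

lemma detAuxPhi_natDegree_X_le (ι : Type*) (S : Set ι) (v : ι) :
    (detAuxPhi ι S (X v)).natDegree ≤ 1 := by
  rw [detAuxPhi_X]
  split
  · calc (Polynomial.C (X v : MvPolynomial ι ℂ) * Polynomial.X).natDegree
        ≤ _ + _ := Polynomial.natDegree_mul_le
      _ ≤ 1 := by simp
  · simp

lemma detAuxPhi_vars_of_natDegree_eq_zero (ι : Type*) (S : Set ι) (f : MvPolynomial ι ℂ)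
    (h : (detAuxPhi ι S f).natDegree = 0) : ∀ v ∈ S, v ∉ f.vars := by
  classical
  -- f = bind₁ g f where g kills variables in S
  set g : ι → MvPolynomial ι ℂ := fun v => if v ∈ S then 0 else X v with hg
  have hconst : detAuxPhi ι S f = Polynomial.C ((detAuxPhi ι S f).coeff 0) :=
    Polynomial.eq_C_of_natDegree_eq_zero h
  have h1 : Polynomial.eval 1 (detAuxPhi ι S f) = (detAuxPhi ι S f).coeff 0 := by
    rw [hconst]; simp
  have h0 : Polynomial.eval 0 (detAuxPhi ι S f) = (detAuxPhi ι S f).coeff 0 := by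
    rw [hconst]; simp
  have key : Polynomial.eval 0 (detAuxPhi ι S f) = bind₁ g f := by
    have : (Polynomial.evalRingHom (0 : MvPolynomial ι ℂ)).comp
        (detAuxPhi ι S).toRingHom = (bind₁ g).toRingHom := by
      apply MvPolynomial.ringHom_ext
      · intro r
        simp only [RingHom.comp_apply, AlgHom.toRingHom_eq_coe, RingHom.coe_coe,
          Polynomial.coe_evalRingHom]
        rw [show ((C r : MvPolynomial ι ℂ)) = algebraMap ℂ _ r from rfl, AlgHom.commutes,
          AlgHom.commutes]
        simp [Polynomial.algebraMap_apply]
      · intro v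
        simp only [RingHom.comp_apply, AlgHom.toRingHom_eq_coe, RingHom.coe_coe,
          detAuxPhi_X, bind₁_X_right, hg, Polynomial.coe_evalRingHom]
        by_cases hv : v ∈ S <;> simp [hv]
    exact congrArg (fun h => h f) this
  have hf : f = bind₁ g f := by
    rw [← key, h0, ← h1, detAuxPhi_eval_one]
  intro v hv hvf
  have := MvPolynomial.vars_bind₁ g f (hf ▸ hvf)
  rcases Finset.mem_biUnion.mp this with ⟨w, _, hw⟩
  rcases (by by_cases h : w ∈ S <;> simp [hg, h] at hw ⊢; exact hw : v = w ∧ w ∉ S) with ⟨rfl, hws⟩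
  exact hws hv

lemma detAuxPhi_natDegree_det_le (ι : Type*) (n : ℕ)
    (A : Matrix (Fin n) (Fin n) (MvPolynomial ι ℂ))
    (hentry : ∀ i j, A i j = 0 ∨ ∃ v : ι, A i j = X v)
    (S : Set ι) (i : Fin n)
    (hrow : ∀ (i' j : Fin n), i' ≠ i → ∀ v, A i' j = X v → v ∉ S) :
    (detAuxPhi ι S A.det).natDegree ≤ 1 := by
  classical
  rw [Matrix.det_apply, map_sum]
  apply Polynomial.natDegree_sum_le_of_forall_le
  intro σ _
  have hsmul : detAuxPhi ι S (Equiv.Perm.sign σ • ∏ k, A (σ k) k)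
      = ((Equiv.Perm.sign σ : ℤ) : Polynomial (MvPolynomial ι ℂ)) *
        detAuxPhi ι S (∏ k, A (σ k) k) := by
    rw [← zsmul_eq_mul, ← map_zsmul, Units.smul_def]
  rw [hsmul]
  calc (((Equiv.Perm.sign σ : ℤ) : Polynomial (MvPolynomial ι ℂ)) *
        detAuxPhi ι S (∏ k, A (σ k) k)).natDegree
      ≤ _ + _ := Polynomial.natDegree_mul_le
    _ ≤ 0 + (detAuxPhi ι S (∏ k, A (σ k) k)).natDegree := by
        gcongr; exact le_of_eq (Polynomial.natDegree_intCast _)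
    _ = (detAuxPhi ι S (∏ k, A (σ k) k)).natDegree := by ring
    _ ≤ 1 := by
        rw [map_prod]
        refine le_trans (Polynomial.natDegree_prod_le _ _) ?_
        calc ∑ k, (detAuxPhi ι S (A (σ k) k)).natDegree
            ≤ ∑ k : Fin n, (if k = σ⁻¹ i then 1 else 0) := by
              apply Finset.sum_le_sum
              intro k _
              by_cases hk : k = σ⁻¹ i
              · rw [if_pos hk]
                rcases hentry (σ k) k with h0 | ⟨v, hv⟩
                · simp [h0]
                · exact hv ▸ detAuxPhi_natDegree_X_le ι S v
              · rw [if_neg hk]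
                rcases hentry (σ k) k with h0 | ⟨v, hv⟩
                · simp [h0]
                · have hne : σ k ≠ i := fun h => hk (by simp [← h])
                  have hvS : v ∉ S := hrow (σ k) k hne v hv
                  rw [hv, detAuxPhi_X, if_neg hvS]
                  simp
          _ ≤ 1 := by rw [Finset.sum_ite_eq']; split <;> simp

lemma split_vars (ι : Type*) (S : Set ι) (d p q : MvPolynomial ι ℂ)
    (hpq : d = p * q) (hdeg : (detAuxPhi ι S d).natDegree ≤ 1) :
    (∀ v ∈ S, v ∉ p.vars) ∨ (∀ v ∈ S, v ∉ q.vars) := by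
  by_cases hp : p = 0
  · left; simp [hp]
  by_cases hq : q = 0
  · right; simp [hq]
  have hP := detAuxPhi_ne_zero ι S hp
  have hQ := detAuxPhi_ne_zero ι S hq
  have hmul : detAuxPhi ι S d = detAuxPhi ι S p * detAuxPhi ι S q := by
    rw [hpq, map_mul]
  rw [hmul, Polynomial.natDegree_mul hP hQ] at hdeg
  rcases Nat.le_one_iff_eq_zero_or_eq_one.mp hdeg with h | h
  · obtain ⟨h1, h2⟩ := Nat.add_eq_zero.mp h
    left; exact detAuxPhi_vars_of_natDegree_eq_zero ι S p h1
  · rcases Nat.add_eq_one_iff.mp h with ⟨h1, _⟩ | ⟨h1, h2⟩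
    · left; exact detAuxPhi_vars_of_natDegree_eq_zero ι S p h1
    · right; exact detAuxPhi_vars_of_natDegree_eq_zero ι S q h2

lemma rows_case (ι : Type*) (n : ℕ)
    (A : Matrix (Fin n) (Fin n) (MvPolynomial ι ℂ))
    (hentry : ∀ i j, A i j = 0 ∨ ∃ v : ι, A i j = X v)
    (hdistinct : ∀ (i j i' j' : Fin n) (v v' : ι),
      A i j = X v → A i' j' = X v' → (i, j) ≠ (i', j') → v ≠ v')
    (p q : MvPolynomial ι ℂ) (hpq : A.det = p * q) :
    ∀ i : Fin n,
      (∀ (j : Fin n) (v : ι), A i j = X v → v ∉ p.vars) ∨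
      (∀ (j : Fin n) (v : ι), A i j = X v → v ∉ q.vars) := by
  intro i
  set S : Set ι := {v | ∃ j, A i j = X v} with hS
  have hrow : ∀ (i' j : Fin n), i' ≠ i → ∀ v, A i' j = X v → v ∉ S := by
    rintro i' j hne v hv ⟨j', hj'⟩
    exact hdistinct i' j i j' v v hv hj' (by simp [hne]) rfl
  have hdeg := detAuxPhi_natDegree_det_le ι n A hentry S i hrow
  rcases split_vars ι S A.det p q hpq hdeg with h | h
  · left; intro j v hv; exact h v ⟨j, hv⟩
  · right; intro j v hv; exact h v ⟨j, hv⟩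


/-- let `A` be an `n × n` matrix whose entries are either `0` or single
indeterminates, distinct nonzero entries involving pairwise distinct indeterminates.
If `det A = p · q`, then for each row the indeterminates occurring in that row all
avoid `p` or all avoid `q`, and likewise for each column: `p` and `q` are polynomials
in the entries of disjoint sets of rows and of disjoint sets of columns of `A`. -/
theorem factors_of_det_use_disjoint_rows_and_columns
    (ι : Type*) (n : ℕ)
    (A : Matrix (Fin n) (Fin n) (MvPolynomial ι ℂ))
    (hentry : ∀ i j, A i j = 0 ∨ ∃ v : ι, A i j = X v)
    (hdistinct : ∀ (i j i' j' : Fin n) (v v' : ι),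
      A i j = X v → A i' j' = X v' → (i, j) ≠ (i', j') → v ≠ v')
    (p q : MvPolynomial ι ℂ) (hpq : A.det = p * q) :
    (∀ i : Fin n,
      (∀ (j : Fin n) (v : ι), A i j = X v → v ∉ p.vars) ∨
      (∀ (j : Fin n) (v : ι), A i j = X v → v ∉ q.vars)) ∧
    (∀ j : Fin n,
      (∀ (i : Fin n) (v : ι), A i j = X v → v ∉ p.vars) ∨
      (∀ (i : Fin n) (v : ι), A i j = X v → v ∉ q.vars)) := by
  constructor
  · exact rows_case ι n A hentry hdistinct p q hpq
  · have hT : A.transpose.det = p * q := by rw [Matrix.det_transpose]; exact hpq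
    have := rows_case ι n A.transpose (fun i j => hentry j i)
      (fun i j i' j' v v' h h' hne =>
        hdistinct j i j' i' v v' h h' (fun hc => hne (by
          simp only [Prod.mk.injEq] at hc ⊢; exact ⟨hc.2, hc.1⟩)))
      p q hT
    exact this
end

section
/- In the Richardson pattern setup, define the weight of the indeterminate X(a,b) to be the vector wt(X(a,b)) := e_a + e_{a+1} + ⋯ + e_{b−1} ∈ ℤ^{N−1} (where e_1,…,e_{N−1} is the standard basis), and the weight of a monomial to be the sum of the weights of its indeterminate factors counted with multiplicity. Then for every k with 0 ≤ k ≤ N−2I, every monomial in the support of m_{k+I} has the same weight, namely Σ_{a=1}^{I} (e_a + e_{a+1} + ⋯ + e_{N−a}); i.e., each nonzero m_{k+I} is weighted-homogeneous of weight α(1,N−1) + α(2,N−2) + ⋯ + α(I,N−I). -/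
open scoped Classical

noncomputable section

/-- The `t`-th coordinate of the weight of a monomial `d`: the weight of the
indeterminate `X(a,b)` is `e_a + e_{a+1} + ⋯ + e_{b−1}`, and weights of monomials are
added with multiplicity. -/
def wtMono (d : (ℕ × ℕ) →₀ ℕ) (t : ℕ) : ℕ :=
  ∑ p ∈ d.support, d p * (if p.1 ≤ t ∧ t ≤ p.2 - 1 then 1 else 0)

/-! ### Auxiliary lemmas -/

lemma wtMono_eq_sum (d : (ℕ × ℕ) →₀ ℕ) (t : ℕ) :
    wtMono d t = d.sum (fun p n => n * (if p.1 ≤ t ∧ t ≤ p.2 - 1 then 1 else 0)) := rfl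

lemma wt_add (d₁ d₂ : (ℕ × ℕ) →₀ ℕ) (t : ℕ) :
    wtMono (d₁ + d₂) t = wtMono d₁ t + wtMono d₂ t := by
  rw [wtMono_eq_sum, wtMono_eq_sum, wtMono_eq_sum]
  exact Finsupp.sum_add_index' (fun i => zero_mul _) (fun i b c => add_mul b c _)

lemma wt_single (a : ℕ × ℕ) (t : ℕ) :
    wtMono (Finsupp.single a 1) t = if a.1 ≤ t ∧ t ≤ a.2 - 1 then 1 else 0 := by
  rw [wtMono_eq_sum]
  refine Eq.trans (Finsupp.sum_single_index ?_) (one_mul _)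
  exact zero_mul _

lemma wt_sum {α : Type} (s : Finset α) (g : α → ℕ × ℕ) (t : ℕ) :
    wtMono (∑ a ∈ s, Finsupp.single (g a) 1) t =
      ∑ a ∈ s, (if (g a).1 ≤ t ∧ t ≤ (g a).2 - 1 then 1 else 0) := by
  induction s using Finset.cons_induction with
  | empty => simp [wtMono]
  | cons a s ha ih => rw [Finset.sum_cons, Finset.sum_cons, wt_add, wt_single, ih]

lemma prodX {α : Type} (s : Finset α) (g : α → ℕ × ℕ) :
    ∏ a ∈ s, (MvPolynomial.X (g a) : MvPolynomial (ℕ × ℕ) ℂ) =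
      MvPolynomial.monomial (∑ a ∈ s, Finsupp.single (g a) 1) 1 := by
  induction s using Finset.cons_induction with
  | empty => simp
  | cons a s ha ih =>
      rw [Finset.prod_cons, ih, Finset.sum_cons, MvPolynomial.X, MvPolynomial.monomial_mul,
        one_mul]

def iExt (k : ℕ) (i : Fin k → ℕ) (j : ℕ) : ℕ := if h : j < k then i ⟨j, h⟩ else 0

lemma rowLabel_eq (I k : ℕ) (i : Fin k → ℕ) (p : Fin (k + I)) :
    rowLabel I k i p = if (p : ℕ) < I then (p : ℕ) + 1 else iExt k i ((p : ℕ) - I) := by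
  unfold rowLabel iExt
  by_cases h : (p : ℕ) < I
  · simp [h]
  · have hp := p.isLt
    rw [dif_neg h, if_neg h, dif_pos (by omega)]

lemma colLabel_eq (N I k : ℕ) (i : Fin k → ℕ) (q : Fin (k + I)) :
    colLabel N I k i q = if (q : ℕ) < k then iExt k i (q : ℕ)
      else N - I + 1 + ((q : ℕ) - k) := by
  unfold colLabel iExt
  by_cases h : (q : ℕ) < k
  · rw [dif_pos h, if_pos h, dif_pos h]
  · simp [h]

lemma sum_ite_one {s : Finset ℕ} {p : ℕ → Prop} [DecidablePred p] :
    ∑ x ∈ s, (if p x then (1 : ℕ) else 0) = (s.filter p).card := by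
  simp [Finset.sum_ite]

/-- The key computation: any monomial of `det (Amat N I k τ i)` has the stated weight,
for an arbitrary tuple `i`. -/
lemma key (N I k : ℕ) (hI : 1 ≤ I) (hNI : 2 * I ≤ N) (τ : Finset ℕ) (i : Fin k → ℕ)
    (d : (ℕ × ℕ) →₀ ℕ) (hd : d ∈ ((Amat N I k τ i).det).support) (t : ℕ) :
    wtMono d t = ((Finset.Icc 1 I).filter fun a => a ≤ t ∧ t ≤ N - a).card := by
  rw [Matrix.det_apply] at hd
  obtain ⟨σ, -, hdσ⟩ := Finset.mem_biUnion.mp (MvPolynomial.support_sum hd)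
  have hdP : d ∈ (∏ p, (Amat N I k τ i) (σ p) p).support := MvPolynomial.support_smul hdσ
  have hPne : (∏ p, (Amat N I k τ i) (σ p) p) ≠ 0 := by
    intro h; rw [h] at hdP; simp at hdP
  have hfac : ∀ p : Fin (k + I), (Amat N I k τ i) (σ p) p ≠ 0 :=
    fun p => Finset.prod_ne_zero_iff.mp hPne p (Finset.mem_univ p)
  have hlt : ∀ p, rowLabel I k i (σ p) < colLabel N I k i p := by
    intro p
    by_contra h
    exact hfac p (by simp [Amat, h])
  have hX : ∀ p, (Amat N I k τ i) (σ p) p =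
      MvPolynomial.X (rowLabel I k i (σ p), colLabel N I k i p) := by
    intro p
    have h := hfac p
    simp only [Amat, Matrix.of_apply, xcoord] at h ⊢
    split_ifs at h ⊢ with h1 h2
    · exact absurd rfl h
    · rfl
    · exact absurd rfl h
  have hprod : (∏ p, (Amat N I k τ i) (σ p) p) =
      MvPolynomial.monomial
        (∑ p : Fin (k + I),
          Finsupp.single (rowLabel I k i (σ p), colLabel N I k i p) 1) 1 := by
    rw [Finset.prod_congr rfl (fun p _ => hX p)]
    exact prodX _ _
  have hdeq : d = ∑ p : Fin (k + I),
      Finsupp.single (rowLabel I k i (σ p), colLabel N I k i p) 1 := by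
    rw [hprod] at hdP
    simpa [MvPolynomial.support_monomial] using hdP
  rw [hdeq, wt_sum]
  -- now pure combinatorics
  have hsplit : ∀ p : Fin (k + I),
      (if rowLabel I k i (σ p) ≤ t then (1 : ℕ) else 0) =
        (if (rowLabel I k i (σ p), colLabel N I k i p).1 ≤ t ∧
            t ≤ (rowLabel I k i (σ p), colLabel N I k i p).2 - 1 then (1 : ℕ) else 0) +
        (if colLabel N I k i p ≤ t then (1 : ℕ) else 0) := by
    intro p
    have := hlt p
    simp only
    split_ifs <;> omega
  have hR : (∑ p : Fin (k + I), if rowLabel I k i (σ p) ≤ t then (1 : ℕ) else 0) =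
      (∑ p : Fin (k + I),
        (if (rowLabel I k i (σ p), colLabel N I k i p).1 ≤ t ∧
            t ≤ (rowLabel I k i (σ p), colLabel N I k i p).2 - 1 then (1 : ℕ) else 0)) +
      (∑ p : Fin (k + I), if colLabel N I k i p ≤ t then (1 : ℕ) else 0) := by
    rw [← Finset.sum_add_distrib]
    exact Finset.sum_congr rfl fun p _ => hsplit p
  have hσsum : (∑ p : Fin (k + I), if rowLabel I k i (σ p) ≤ t then (1 : ℕ) else 0) =
      ∑ p : Fin (k + I), if rowLabel I k i p ≤ t then (1 : ℕ) else 0 :=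
    Equiv.sum_comp σ (fun p => if rowLabel I k i p ≤ t then (1 : ℕ) else 0)
  -- compute the row-label sum
  have hrow : (∑ p : Fin (k + I), if rowLabel I k i p ≤ t then (1 : ℕ) else 0) =
      min I t + ∑ j ∈ Finset.range k, (if iExt k i j ≤ t then (1 : ℕ) else 0) := by
    have e1 : (∑ p : Fin (k + I), if rowLabel I k i p ≤ t then (1 : ℕ) else 0) =
        ∑ m ∈ Finset.range (k + I),
          (if (if m < I then m + 1 else iExt k i (m - I)) ≤ t then (1 : ℕ) else 0) := by
      rw [← Fin.sum_univ_eq_sum_range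
        (fun m => if (if m < I then m + 1 else iExt k i (m - I)) ≤ t then (1 : ℕ) else 0)]
      exact Finset.sum_congr rfl fun p _ => by rw [rowLabel_eq]
    rw [e1, show k + I = I + k from Nat.add_comm k I, Finset.sum_range_add]
    congr 1
    · have : ∀ m ∈ Finset.range I,
          (if (if m < I then m + 1 else iExt k i (m - I)) ≤ t then (1 : ℕ) else 0) =
          (if m + 1 ≤ t then (1 : ℕ) else 0) := by
        intro m hm
        rw [if_pos (Finset.mem_range.mp hm)]
      rw [Finset.sum_congr rfl this, sum_ite_one]
      have : (Finset.range I).filter (fun m => m + 1 ≤ t) = Finset.range (min I t) := by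
        ext m; simp [Finset.mem_filter, Finset.mem_range]
      rw [this, Finset.card_range]
    · refine Finset.sum_congr rfl fun j hj => ?_
      have h1 : ¬ (I + j < I) := by omega
      have h2 : I + j - I = j := by omega
      rw [if_neg h1, h2]
  -- compute the column-label sum
  have hcol : (∑ p : Fin (k + I), if colLabel N I k i p ≤ t then (1 : ℕ) else 0) =
      (∑ j ∈ Finset.range k, (if iExt k i j ≤ t then (1 : ℕ) else 0)) +
        (min N t - (N - I)) := by
    have e1 : (∑ p : Fin (k + I), if colLabel N I k i p ≤ t then (1 : ℕ) else 0) =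
        ∑ m ∈ Finset.range (k + I),
          (if (if m < k then iExt k i m else N - I + 1 + (m - k)) ≤ t then (1 : ℕ) else 0) := by
      rw [← Fin.sum_univ_eq_sum_range
        (fun m => if (if m < k then iExt k i m else N - I + 1 + (m - k)) ≤ t then (1 : ℕ) else 0)]
      exact Finset.sum_congr rfl fun q _ => by rw [colLabel_eq]
    rw [e1, Finset.sum_range_add]
    congr 1
    · refine Finset.sum_congr rfl fun m hm => ?_
      rw [if_pos (Finset.mem_range.mp hm)]
    · have : ∀ j ∈ Finset.range I,
          (if (if k + j < k then iExt k i (k + j) else N - I + 1 + (k + j - k)) ≤ t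
            then (1 : ℕ) else 0) = (if N - I + 1 + j ≤ t then (1 : ℕ) else 0) := by
        intro j hj
        have h1 : ¬ (k + j < k) := by omega
        have h2 : k + j - k = j := by omega
        rw [if_neg h1, h2]
      rw [Finset.sum_congr rfl this, sum_ite_one]
      have : (Finset.range I).filter (fun j => N - I + 1 + j ≤ t) =
          Finset.range (min N t - (N - I)) := by
        ext j; simp [Finset.mem_filter, Finset.mem_range]; omega
      rw [this, Finset.card_range]
  -- the right-hand side
  have hrhs : ((Finset.Icc 1 I).filter fun a => a ≤ t ∧ t ≤ N - a).card =
      min I (min t (N - t)) := by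
    have : (Finset.Icc 1 I).filter (fun a => a ≤ t ∧ t ≤ N - a) =
        Finset.Icc 1 (min I (min t (N - t))) := by
      ext a; simp [Finset.mem_filter, Finset.mem_Icc]; omega
    rw [this, Nat.card_Icc]
    omega
  rw [hσsum, hrow, hcol] at hR
  rw [hrhs]
  omega

/-- in the Richardson pattern setup, every monomial in the support of
`m_{k+I}` has the same weight, namely
`α(1,N−1) + α(2,N−2) + ⋯ + α(I,N−I) = Σ_{a=1}^{I} (e_a + ⋯ + e_{N−a})`;
coordinatewise, the `t`-th coordinate of the weight is `#{a : 1 ≤ a ≤ I, a ≤ t ≤ N−a}`. -/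
theorem mPoly_weighted_homogeneous
    (N I : ℕ) (hI : 1 ≤ I) (hNI : 2 * I ≤ N) (τ : Finset ℕ)
    (hτsub : ∀ t ∈ τ, 1 ≤ t ∧ t ≤ N - 1)
    (hτ1 : ∀ t : ℕ, 1 ≤ t → t ≤ I - 1 → t ∈ τ) (hτ2 : I ∉ τ)
    (hτ3 : ∀ t : ℕ, N - I + 1 ≤ t → t ≤ N - 1 → t ∈ τ) (hτ4 : N - I ∉ τ)
    (k : ℕ) (hk : k ≤ N - 2 * I) :
    ∀ d ∈ (mPoly N I k τ).support, ∀ t : ℕ,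
      wtMono d t =
        ((Finset.Icc 1 I).filter fun a => a ≤ t ∧ t ≤ N - a).card := by


  intro d hd t
  unfold mPoly at hd
  obtain ⟨i, -, hdi⟩ := Finset.mem_biUnion.mp (MvPolynomial.support_sum hd)
  exact key N I k hI hNI τ _ d hdi t
end
end
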